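/- arXiv:1809.09438 — 5 statements merged into one kernel-verified Lean document; each statement's English description precedes it below -/
import Mathlib

section
/- For n ≥ 5, the biharmonic potential of the Gaussian admits the one-dimensional integral representation: (Γ(n/2)/(4π^{n/2}(n-2)(n-4))) ∫_{ℝ^n} e^{-|y|²}/|x-y|^{n-4} dy = (1/16) ∫_0^∞ e^{-|x|²/(1+t)} (1+t)^{-n/2} t dt. -/
/-!
Subordination writes `|x - y|^(4-n)` as a Gamma-weighted superposition of Gaussians
`e^{-s|x-y|²}`, `s > 0`. After exchanging the integrals, each inner integral
`∫ e^{-|y|² - s|x-y|²} dy` is an explicit Gaussian, and the substitution `s = 1/t`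
turns the remaining one-dimensional integral into the stated one; the constants reduce to
`Γ(n/2) = ((n-2)/2)((n-4)/2) Γ((n-4)/2)`.
-/

open Real MeasureTheory Set
open scoped RealInnerProductSpace

lemma rpow_neg_eq_integral_rpow_mul_exp {a c : ℝ} (ha : 0 < a) (hc : 0 < c) :
    c ^ (-a) = (Gamma a)⁻¹ * ∫ s in Ioi 0, s ^ (a - 1) * rexp (-(s * c)) := by
  simp_rw [mul_comm _ c]
  rw [integral_rpow_mul_exp_neg_mul_Ioi ha hc, one_div, inv_rpow hc.le, rpow_neg hc.le]
  field_simp [(Gamma_pos_of_pos ha).ne']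

lemma integrableOn_rpow_mul_one_add_rpow_neg {a b : ℝ} (ha : 0 < a) (hab : a < b) :
    IntegrableOn (fun s : ℝ ↦ s ^ (a - 1) * (1 + s) ^ (-b)) (Ioi 0) := by
  have hmeas : AEStronglyMeasurable (fun s : ℝ ↦ s ^ (a - 1) * (1 + s) ^ (-b)) := by
    fun_prop
  rw [← Ioc_union_Ioi_eq_Ioi zero_le_one]
  refine IntegrableOn.union ?_ ?_
  · have h := intervalIntegral.intervalIntegrable_rpow' (a := 0) (b := 1) (r := a - 1)
      (by linarith)
    rw [intervalIntegrable_iff, uIoc_of_le zero_le_one] at h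
    refine h.mono' hmeas.restrict ?_
    filter_upwards [ae_restrict_mem measurableSet_Ioc] with s hs
    have hs0 : 0 < s := hs.1
    rw [norm_of_nonneg (by positivity)]
    refine mul_le_of_le_one_right (by positivity) ?_
    exact rpow_le_one_of_one_le_of_nonpos (by linarith) (by linarith)
  · refine (integrableOn_Ioi_rpow_of_lt (a := a - 1 - b) (by linarith) one_pos).mono'
      hmeas.restrict ?_
    filter_upwards [ae_restrict_mem measurableSet_Ioi] with s hs
    have hs0 : 0 < s := one_pos.trans hs
    rw [norm_of_nonneg (by positivity), sub_eq_add_neg _ b, rpow_add hs0]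
    exact mul_le_mul_of_nonneg_left (rpow_le_rpow_of_nonpos hs0 (by linarith) (by linarith))
      (by positivity)

lemma div_rpow_eq_mul_rpow_neg {p q : ℝ} (hp : 0 ≤ p) (hq : 0 ≤ q) (b : ℝ) :
    (p / q) ^ b = p ^ b * q ^ (-b) := by
  rw [div_rpow hp hq, rpow_neg hq, div_eq_mul_inv]

lemma integrableOn_rpow_mul_div_one_add_rpow_mul_exp {a b c : ℝ} (ha : 0 < a) (hab : a < b)
    (hc : 0 ≤ c) :
    IntegrableOn (fun s : ℝ ↦ s ^ (a - 1) * ((π / (1 + s)) ^ b * rexp (-(s * c / (1 + s)))))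
      (Ioi 0) := by
  refine ((integrableOn_rpow_mul_one_add_rpow_neg ha hab).const_mul (π ^ b)).mono'
    (by fun_prop) ?_
  filter_upwards [ae_restrict_mem measurableSet_Ioi] with s (hs : 0 < s)
  have hexp : rexp (-(s * c / (1 + s))) ≤ 1 := exp_le_one_iff.2 (by
    have : 0 ≤ s * c / (1 + s) := by positivity
    linarith)
  rw [norm_of_nonneg (by positivity), div_rpow_eq_mul_rpow_neg pi_pos.le (by positivity)]
  calc s ^ (a - 1) * (π ^ b * (1 + s) ^ (-b) * rexp (-(s * c / (1 + s))))
      ≤ s ^ (a - 1) * (π ^ b * (1 + s) ^ (-b) * 1) := by gcongr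
    _ = π ^ b * (s ^ (a - 1) * (1 + s) ^ (-b)) := by ring

-- The substitution `s = 1/t`.
lemma integral_rpow_mul_div_one_add_rpow_mul_exp (a b c : ℝ) :
    ∫ s in Ioi 0, s ^ (a - 1) * ((π / (1 + s)) ^ b * rexp (-(s * c / (1 + s)))) =
      π ^ b * ∫ t in Ioi 0, rexp (-c / (1 + t)) * (1 + t) ^ (-b) * t ^ (b - a - 1) := by
  rw [← integral_comp_rpow_Ioi _ (p := -1) (by norm_num), ← integral_const_mul]
  refine setIntegral_congr_fun measurableSet_Ioi fun t (ht : 0 < t) ↦ ?_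
  have h1t : 0 < 1 + t := by linarith
  have hinv : 1 + t ^ (-1 : ℝ) = (1 + t) / t := by
    rw [rpow_neg_one]; field_simp; ring
  have hpow : t ^ (-1 - 1 : ℝ) * (t ^ (-1 : ℝ)) ^ (a - 1) * t ^ b = t ^ (b - a - 1) := by
    rw [← rpow_mul ht.le, ← rpow_add ht, ← rpow_add ht]
    ring_nf
  simp only [abs_neg, abs_one, one_mul, smul_eq_mul, hinv, div_div_eq_mul_div]
  have hc : t ^ (-1 : ℝ) * c * t = c := by
    rw [rpow_neg_one]; field_simp
  rw [div_rpow_eq_mul_rpow_neg (by positivity) h1t.le, mul_rpow pi_pos.le ht.le, hc, ← neg_div]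
  linear_combination π ^ b * rexp (-c / (1 + t)) * (1 + t) ^ (-b) * hpow

lemma exp_neg_sq_norm_div_rpow_norm_sub {E : Type*} [NormedAddCommGroup E] {r : ℝ} (hr : 0 < r)
    {x y : E} (hxy : y ≠ x) :
    rexp (-‖y‖ ^ 2) / ‖x - y‖ ^ r =
      (Gamma (r / 2))⁻¹ * ∫ s in Ioi 0, s ^ (r / 2 - 1) * rexp (-(‖y‖ ^ 2 + s * ‖x - y‖ ^ 2)) := by
  have hxy : 0 < ‖x - y‖ := norm_pos_iff.2 (sub_ne_zero.2 hxy.symm)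
  have hpow : (‖x - y‖ ^ 2) ^ (-(r / 2)) = (‖x - y‖ ^ r)⁻¹ := by
    rw [← rpow_natCast, ← rpow_mul hxy.le, ← rpow_neg hxy.le]
    congr 1
    push_cast
    ring
  simp only [neg_add, exp_add, mul_left_comm _ (rexp _), integral_const_mul]
  rw [← rpow_neg_eq_integral_rpow_mul_exp (by positivity) (by positivity), hpow, div_eq_mul_inv]

section Gaussian

variable {V : Type*} [NormedAddCommGroup V] [InnerProductSpace ℝ V]

lemma ofReal_exp_neg_mul_sq_norm_add (b c : ℝ) (w v : V) :
    ((rexp (-b * ‖v‖ ^ 2 + c * ⟪w, v⟫) : ℝ) : ℂ) =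
      Complex.exp (-(b : ℂ) * (‖v‖ : ℂ) ^ 2 + (c : ℂ) * ((⟪w, v⟫ : ℝ) : ℂ)) := by
  push_cast; rfl

lemma exp_neg_sq_norm_add_mul_sq_norm_sub (s : ℝ) (x y : V) :
    rexp (-(‖y‖ ^ 2 + s * ‖x - y‖ ^ 2)) =
      rexp (-(1 + s) * ‖y‖ ^ 2 + 2 * s * ⟪x, y⟫) * rexp (-(s * ‖x‖ ^ 2)) := by
  rw [← Real.exp_add, norm_sub_sq_real]
  ring_nf

variable [FiniteDimensional ℝ V] [MeasurableSpace V] [BorelSpace V]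

lemma integrable_exp_neg_mul_sq_norm_add {b : ℝ} (hb : 0 < b) (c : ℝ) (w : V) :
    Integrable fun v : V ↦ rexp (-b * ‖v‖ ^ 2 + c * ⟪w, v⟫) := by
  have h := (GaussianFourier.integrable_cexp_neg_mul_sq_norm_add
    (show 0 < (b : ℂ).re from hb) (c : ℂ) w).re
  simpa only [← ofReal_exp_neg_mul_sq_norm_add, RCLike.re_to_complex, Complex.ofReal_re] using h

lemma integral_exp_neg_mul_sq_norm_add {b : ℝ} (hb : 0 < b) (c : ℝ) (w : V) :
    ∫ v : V, rexp (-b * ‖v‖ ^ 2 + c * ⟪w, v⟫) =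
      (π / b) ^ (Module.finrank ℝ V / 2 : ℝ) * rexp (c ^ 2 * ‖w‖ ^ 2 / (4 * b)) := by
  rw [← Complex.ofReal_inj, ← integral_complex_ofReal]
  simp only [ofReal_exp_neg_mul_sq_norm_add]
  rw [GaussianFourier.integral_cexp_neg_mul_sq_norm_add (show 0 < (b : ℂ).re from hb),
    Complex.ofReal_mul, Complex.ofReal_cpow (by positivity), Complex.ofReal_exp]
  push_cast
  rfl

lemma integrable_exp_neg_sq_norm_add_mul_sq_norm_sub {s : ℝ} (hs : -1 < s) (x : V) :
    Integrable fun y : V ↦ rexp (-(‖y‖ ^ 2 + s * ‖x - y‖ ^ 2)) := by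
  simp only [exp_neg_sq_norm_add_mul_sq_norm_sub]
  exact (integrable_exp_neg_mul_sq_norm_add (by linarith) _ x).mul_const _

lemma integral_exp_neg_sq_norm_add_mul_sq_norm_sub {s : ℝ} (hs : -1 < s) (x : V) :
    ∫ y : V, rexp (-(‖y‖ ^ 2 + s * ‖x - y‖ ^ 2)) =
      (π / (1 + s)) ^ (Module.finrank ℝ V / 2 : ℝ) * rexp (-(s * ‖x‖ ^ 2 / (1 + s))) := by
  have h1s : 1 + s ≠ 0 := by linarith
  simp only [exp_neg_sq_norm_add_mul_sq_norm_sub]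
  rw [integral_mul_const, integral_exp_neg_mul_sq_norm_add (by linarith), mul_assoc,
    ← Real.exp_add]
  congr 2
  field_simp
  ring

lemma integral_integral_rpow_mul_exp_neg_sq_norm_add_mul_sq_norm_sub {a : ℝ} (ha : 0 < a)
    (had : a < Module.finrank ℝ V / 2) (x : V) :
    ∫ y : V, ∫ s in Ioi 0, s ^ (a - 1) * rexp (-(‖y‖ ^ 2 + s * ‖x - y‖ ^ 2)) =
      ∫ s in Ioi 0, s ^ (a - 1) *
        ((π / (1 + s)) ^ (Module.finrank ℝ V / 2 : ℝ) * rexp (-(s * ‖x‖ ^ 2 / (1 + s)))) := by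
  have hF : Integrable (Function.uncurry fun (s : ℝ) (y : V) ↦
      s ^ (a - 1) * rexp (-(‖y‖ ^ 2 + s * ‖x - y‖ ^ 2)))
      ((volume.restrict (Ioi 0)).prod volume) := by
    rw [integrable_prod_iff (by fun_prop)]
    constructor
    · filter_upwards [ae_restrict_mem measurableSet_Ioi] with s (hs : 0 < s)
      simp only [Function.uncurry_apply_pair]
      exact (integrable_exp_neg_sq_norm_add_mul_sq_norm_sub (by linarith) x).const_mul _
    · refine (integrableOn_rpow_mul_div_one_add_rpow_mul_exp ha had (sq_nonneg ‖x‖)).congr ?_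
      filter_upwards [ae_restrict_mem measurableSet_Ioi] with s (hs : 0 < s)
      simp only [Function.uncurry_apply_pair, norm_mul, norm_of_nonneg (rpow_nonneg hs.le _),
        norm_of_nonneg (exp_nonneg _), integral_const_mul,
        integral_exp_neg_sq_norm_add_mul_sq_norm_sub (by linarith : (-1 : ℝ) < s)]
  rw [← integral_integral_swap hF]
  refine setIntegral_congr_fun measurableSet_Ioi fun s (hs : 0 < s) ↦ ?_
  rw [integral_const_mul, integral_exp_neg_sq_norm_add_mul_sq_norm_sub (by linarith)]

theorem integral_exp_neg_sq_norm_div_rpow_norm_sub {r : ℝ} (hr : 0 < r)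
    (hrd : r < Module.finrank ℝ V) (x : V) :
    ∫ y : V, rexp (-‖y‖ ^ 2) / ‖x - y‖ ^ r =
      (Gamma (r / 2))⁻¹ * π ^ (Module.finrank ℝ V / 2 : ℝ) *
        ∫ t in Ioi 0, rexp (-‖x‖ ^ 2 / (1 + t)) * (1 + t) ^ (-(Module.finrank ℝ V / 2 : ℝ)) *
          t ^ (Module.finrank ℝ V / 2 - r / 2 - 1 : ℝ) := by
  have : Nontrivial V := Module.finrank_pos_iff.1 (by exact_mod_cast hr.trans hrd)
  calc ∫ y : V, rexp (-‖y‖ ^ 2) / ‖x - y‖ ^ r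
      = ∫ y : V, (Gamma (r / 2))⁻¹ *
          ∫ s in Ioi 0, s ^ (r / 2 - 1) * rexp (-(‖y‖ ^ 2 + s * ‖x - y‖ ^ 2)) := by
        refine integral_congr_ae ?_
        filter_upwards [volume.ae_ne x] with y hy
        exact exp_neg_sq_norm_div_rpow_norm_sub hr hy
    _ = _ := by
        rw [integral_const_mul, integral_integral_rpow_mul_exp_neg_sq_norm_add_mul_sq_norm_sub
          (by positivity) (by linarith) x, integral_rpow_mul_div_one_add_rpow_mul_exp, mul_assoc]

end Gaussian

/-- For `n ≥ 5`, the biharmonic potential of the Gaussian admits the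
one-dimensional integral representation
`(Γ(n/2)/(4π^{n/2}(n-2)(n-4))) ∫_{ℝⁿ} e^{-|y|²}/|x-y|^{n-4} dy
  = (1/16) ∫₀^∞ e^{-|x|²/(1+t)} (1+t)^{-n/2} t dt`. -/
theorem biharmonic_gaussian_one_dim_repr (n : ℕ) (hn : 5 ≤ n)
    (x : EuclideanSpace ℝ (Fin n)) :
    (Real.Gamma ((n : ℝ) / 2) / (4 * Real.pi ^ ((n : ℝ) / 2) * ((n : ℝ) - 2) * ((n : ℝ) - 4))) *
      (∫ y : EuclideanSpace ℝ (Fin n),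
        Real.exp (-‖y‖ ^ 2) / ‖x - y‖ ^ ((n : ℝ) - 4)) =
    (1 / 16) * ∫ t in Set.Ioi (0 : ℝ),
      Real.exp (-‖x‖ ^ 2 / (1 + t)) * (1 + t) ^ (-(n : ℝ) / 2) * t := by
  have hn5 : (5 : ℝ) ≤ n := by exact_mod_cast hn
  have hr : 0 < (n : ℝ) - 4 := by linarith
  have hΓ : Gamma ((n : ℝ) / 2) = ((n - 2) / 2) * ((n - 4) / 2) * Gamma (((n : ℝ) - 4) / 2) := by
    rw [show (n : ℝ) / 2 = ((n - 4) / 2 + 1) + 1 by ring, Gamma_add_one (by positivity),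
      Gamma_add_one (by positivity)]
    ring
  have hintegrand : ∀ t : ℝ, (1 + t) ^ (-((n : ℝ) / 2)) * t ^ ((n : ℝ) / 2 - (n - 4) / 2 - 1) =
      (1 + t) ^ (-(n : ℝ) / 2) * t := fun t ↦ by
    rw [neg_div, show (n : ℝ) / 2 - (n - 4) / 2 - 1 = 1 by ring, rpow_one]
  rw [integral_exp_neg_sq_norm_div_rpow_norm_sub hr (by simp) x, finrank_euclideanSpace_fin]
  simp only [mul_assoc, hintegrand, hΓ]
  have hΓpos : 0 < Gamma (((n : ℝ) - 4) / 2) := Gamma_pos_of_pos (by positivity)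
  have hn2 : (n : ℝ) - 2 ≠ 0 := by linarith
  field_simp
  ring
end

section
/- In dimension 3, the biharmonic potential of the Gaussian equals B_3(e^{-|·|²})(x) = -e^{-|x|²}/8 - (√π/16)(erf(|x|)/|x|)(2|x|²+1) for x ≠ 0. -/
open Real MeasureTheory

/-- The error function `erf x = (2/√π) ∫₀ˣ e^{-t²} dt`. -/
noncomputable def erf (x : ℝ) : ℝ :=
  (2 / Real.sqrt Real.pi) * ∫ t in (0 : ℝ)..x, Real.exp (-t ^ 2)

open Filter Set Topology

lemma gauss_cont : Continuous fun t : ℝ => Real.exp (-t ^ 2) := by continuity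

lemma gauss_integrable : Integrable fun t : ℝ => Real.exp (-t ^ 2) := by
  simpa using integrable_exp_neg_mul_sq (b := 1) one_pos

lemma erf_hasDerivAt (x : ℝ) :
    HasDerivAt erf (2 / Real.sqrt π * Real.exp (-x ^ 2)) x := by
  have h := (gauss_cont.integral_hasStrictDerivAt 0 x).hasDerivAt
  exact h.const_mul (2 / Real.sqrt π)

lemma erf_zero : erf 0 = 0 := by simp [erf]

lemma erf_neg (x : ℝ) : erf (-x) = - erf x := by
  have h := intervalIntegral.integral_comp_neg (a := (0:ℝ)) (b := x)
    (fun t => Real.exp (-t ^ 2))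
  simp only [neg_sq] at h
  have h2 : ∫ t in (-0:ℝ)..(-x), Real.exp (-t ^ 2)
      = - ∫ t in (-x:ℝ)..(-0), Real.exp (-t ^ 2) :=
    intervalIntegral.integral_symm _ _
  simp only [neg_zero] at h h2
  rw [erf, erf, h2, ← h]
  ring

lemma gauss_Ioi_zero : ∫ s in Ioi (0:ℝ), Real.exp (-s ^ 2) = Real.sqrt π / 2 := by
  have := integral_gaussian_Ioi 1
  simpa using this

lemma tendsto_erf_atTop : Tendsto erf atTop (𝓝 1) := by
  have h : Tendsto (fun x : ℝ => ∫ t in (0:ℝ)..x, Real.exp (-t ^ 2)) atTop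
      (𝓝 (∫ s in Ioi (0:ℝ), Real.exp (-s ^ 2))) :=
    intervalIntegral_tendsto_integral_Ioi 0 gauss_integrable.integrableOn tendsto_id
  rw [gauss_Ioi_zero] at h
  have h2 := h.const_mul (2 / Real.sqrt π)
  have hπ : Real.sqrt π ≠ 0 := by positivity
  have : 2 / Real.sqrt π * (Real.sqrt π / 2) = 1 := by field_simp
  rw [this] at h2
  exact h2.congr (fun x => by rw [erf, mul_comm]) |>.congr (fun x => rfl)

lemma tendsto_erf_atBot : Tendsto erf atBot (𝓝 (-1)) := by
  have := (tendsto_erf_atTop.comp tendsto_neg_atBot_atTop).neg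
  simp only [Function.comp] at this
  simpa [erf_neg] using this

lemma gauss_shift_Ioi (t : ℝ) :
    ∫ s in Ioi t, Real.exp (-(s - t) ^ 2) = Real.sqrt π / 2 := by
  have hd : ∀ s ∈ Ici t, HasDerivAt (fun s => Real.sqrt π / 2 * erf (s - t))
      (Real.exp (-(s - t) ^ 2)) s := by
    intro s _
    have h1 := ((erf_hasDerivAt (s - t)).comp s ((hasDerivAt_id s).sub_const t)).const_mul
      (Real.sqrt π / 2)
    refine h1.congr_deriv (Eq.symm ?_)
    have hπ : Real.sqrt π ≠ 0 := by positivity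
    field_simp
  have hlim : Tendsto (fun s => Real.sqrt π / 2 * erf (s - t)) atTop
      (𝓝 (Real.sqrt π / 2 * 1)) := by
    exact (tendsto_erf_atTop.comp (tendsto_atTop_add_const_right _ (-t)
      tendsto_id |>.congr (fun s => by simp [id]; ring))).const_mul _
  have := integral_Ioi_of_hasDerivAt_of_nonneg' hd
    (fun s _ => (Real.exp_pos _).le) hlim
  rw [this]
  simp [erf_zero]

lemma gauss_shift_integrableOn (t : ℝ) :
    IntegrableOn (fun s => Real.exp (-(s - t) ^ 2)) (Ioi t) := by
  have hd : ∀ s ∈ Ici t, HasDerivAt (fun s => Real.sqrt π / 2 * erf (s - t))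
      (Real.exp (-(s - t) ^ 2)) s := by
    intro s _
    have h1 := ((erf_hasDerivAt (s - t)).comp s ((hasDerivAt_id s).sub_const t)).const_mul
      (Real.sqrt π / 2)
    refine h1.congr_deriv (Eq.symm ?_)
    have hπ : Real.sqrt π ≠ 0 := by positivity
    field_simp
  have hlim : Tendsto (fun s => Real.sqrt π / 2 * erf (s - t)) atTop
      (𝓝 (Real.sqrt π / 2 * 1)) := by
    exact (tendsto_erf_atTop.comp (tendsto_atTop_add_const_right _ (-t)
      tendsto_id |>.congr (fun s => by simp [id]; ring))).const_mul _
  exact integrableOn_Ioi_deriv_of_nonneg' hd (fun s _ => (Real.exp_pos _).le) hlim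

lemma erf_Ioi (t : ℝ) (ht : 0 ≤ t) :
    1 - erf t = (2 / Real.sqrt π) * ∫ s in Ioi t, Real.exp (-s ^ 2) := by
  have hsplit : (∫ s in Ioc (0:ℝ) t, Real.exp (-s ^ 2))
      + ∫ s in Ioi t, Real.exp (-s ^ 2) = ∫ s in Ioi (0:ℝ), Real.exp (-s ^ 2) := by
    rw [← setIntegral_union (Ioc_disjoint_Ioi le_rfl) measurableSet_Ioi
      gauss_integrable.integrableOn gauss_integrable.integrableOn,
      Ioc_union_Ioi_eq_Ioi ht]
  have hival : erf t = (2 / Real.sqrt π) * ∫ s in Ioc (0:ℝ) t, Real.exp (-s ^ 2) := by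
    rw [erf, intervalIntegral.integral_of_le ht]
  have hπ : Real.sqrt π ≠ 0 := by positivity
  rw [hival]
  have : (∫ s in Ioi t, Real.exp (-s ^ 2))
      = Real.sqrt π / 2 - ∫ s in Ioc (0:ℝ) t, Real.exp (-s ^ 2) := by
    rw [← gauss_Ioi_zero, ← hsplit]; ring
  rw [this]
  field_simp

lemma erf_le_one (x : ℝ) : erf x ≤ 1 := by
  rcases le_total x 0 with hx | hx
  · have : (∫ t in (0:ℝ)..x, Real.exp (-t ^ 2)) ≤ 0 := by
      rw [intervalIntegral.integral_symm]
      simp only [neg_nonpos]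
      exact intervalIntegral.integral_nonneg hx (fun t _ => (Real.exp_pos _).le)
    have h2 : (2 : ℝ) / Real.sqrt π > 0 := by positivity
    calc erf x ≤ 0 := mul_nonpos_of_nonneg_of_nonpos h2.le this
    _ ≤ 1 := zero_le_one
  · have h := erf_Ioi x hx
    have hnn : 0 ≤ ∫ s in Ioi x, Real.exp (-s ^ 2) :=
      setIntegral_nonneg measurableSet_Ioi (fun s _ => (Real.exp_pos _).le)
    nlinarith [Real.sqrt_nonneg π, mul_nonneg (by positivity : (0:ℝ) ≤ 2 / Real.sqrt π) hnn]

lemma neg_one_le_erf (x : ℝ) : -1 ≤ erf x := by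
  have := erf_le_one (-x)
  rw [erf_neg] at this
  linarith

lemma one_sub_erf_nonneg (x : ℝ) : 0 ≤ 1 - erf x := by linarith [erf_le_one x]

lemma one_sub_erf_le (t : ℝ) (ht : 0 ≤ t) : 1 - erf t ≤ Real.exp (-t ^ 2) := by
  rw [erf_Ioi t ht]
  have hmono : (∫ s in Ioi t, Real.exp (-s ^ 2))
      ≤ ∫ s in Ioi t, Real.exp (-t ^ 2) * Real.exp (-(s - t) ^ 2) := by
    apply setIntegral_mono_on gauss_integrable.integrableOn
      ((gauss_shift_integrableOn t).const_mul _) measurableSet_Ioi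
    intro s hs
    rw [← Real.exp_add]
    apply Real.exp_le_exp.2
    nlinarith [mem_Ioi.1 hs]
  have : (∫ s in Ioi t, Real.exp (-t ^ 2) * Real.exp (-(s - t) ^ 2))
      = Real.exp (-t ^ 2) * (Real.sqrt π / 2) := by
    rw [MeasureTheory.integral_const_mul, gauss_shift_Ioi]
  rw [this] at hmono
  have hπ : (0:ℝ) < Real.sqrt π := by positivity
  calc (2 / Real.sqrt π) * ∫ s in Ioi t, Real.exp (-s ^ 2)
      ≤ (2 / Real.sqrt π) * (Real.exp (-t ^ 2) * (Real.sqrt π / 2)) := by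
        apply mul_le_mul_of_nonneg_left hmono (by positivity)
    _ = Real.exp (-t ^ 2) := by field_simp

lemma sqrt_tendsto_atTop : Tendsto Real.sqrt atTop atTop := by
  apply tendsto_atTop_atTop.2
  intro b
  refine ⟨max 0 (b ^ 2), fun a ha => ?_⟩
  calc b ≤ |b| := le_abs_self b
  _ = Real.sqrt (b ^ 2) := (Real.sqrt_sq_eq_abs b).symm
  _ ≤ Real.sqrt a := Real.sqrt_le_sqrt (le_trans (le_max_right _ _) ha)

lemma sq_add_tendsto (c : ℝ) : Tendsto (fun ρ : ℝ => c ^ 2 + ρ ^ 2) atTop atTop :=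
  tendsto_atTop_add_const_left _ _ (tendsto_pow_atTop two_ne_zero)

lemma sqrt_exp_tendsto_zero : Tendsto (fun v : ℝ => Real.sqrt v * Real.exp (-v)) atTop (𝓝 0) := by
  have h := tendsto_rpow_mul_exp_neg_mul_atTop_nhds_zero (1/2) 1 one_pos
  apply h.congr'
  filter_upwards [eventually_ge_atTop (0:ℝ)] with v hv
  rw [Real.sqrt_eq_rpow, neg_one_mul]


lemma radial2_hasDerivAt (c : ℝ) (hc : c ≠ 0) (ρ : ℝ) :
    HasDerivAt (fun ρ : ℝ => Real.exp (c ^ 2) *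
      (-(Real.sqrt (c ^ 2 + ρ ^ 2) * Real.exp (-(c ^ 2 + ρ ^ 2))) / 2
        + Real.sqrt π / 4 * erf (Real.sqrt (c ^ 2 + ρ ^ 2))))
      (ρ * (Real.sqrt (c ^ 2 + ρ ^ 2) * Real.exp (-ρ ^ 2))) ρ := by
  have hu0 : 0 < c ^ 2 + ρ ^ 2 := by positivity
  have hu : HasDerivAt (fun ρ : ℝ => c ^ 2 + ρ ^ 2) (2 * ρ) ρ := by
    simpa using (hasDerivAt_pow 2 ρ).const_add (c ^ 2)
  have hs : HasDerivAt (fun ρ : ℝ => Real.sqrt (c ^ 2 + ρ ^ 2))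
      (1 / (2 * Real.sqrt (c ^ 2 + ρ ^ 2)) * (2 * ρ)) ρ :=
    (Real.hasDerivAt_sqrt hu0.ne').comp ρ hu
  have he : HasDerivAt (fun ρ : ℝ => Real.exp (-(c ^ 2 + ρ ^ 2)))
      (Real.exp (-(c ^ 2 + ρ ^ 2)) * -(2 * ρ)) ρ := hu.neg.exp
  have herf : HasDerivAt (fun ρ : ℝ => erf (Real.sqrt (c ^ 2 + ρ ^ 2)))
      (2 / Real.sqrt π * Real.exp (-Real.sqrt (c ^ 2 + ρ ^ 2) ^ 2)
        * (1 / (2 * Real.sqrt (c ^ 2 + ρ ^ 2)) * (2 * ρ))) ρ :=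
    (erf_hasDerivAt _).comp ρ hs
  have hF := (((hs.mul he).neg.div_const 2).add (herf.const_mul (Real.sqrt π / 4))).const_mul
    (Real.exp (c ^ 2))
  refine hF.congr_deriv (Eq.symm ?_)
  rw [Real.sq_sqrt hu0.le]
  have hsne : Real.sqrt (c ^ 2 + ρ ^ 2) ≠ 0 := by positivity
  have hE : Real.exp (c ^ 2) * Real.exp (-(c ^ 2 + ρ ^ 2)) = Real.exp (-ρ ^ 2) := by
    rw [← Real.exp_add]; ring_nf
  have hπ : Real.sqrt π ≠ 0 := by positivity
  rw [← hE]
  field_simp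
  ring

lemma radial2_tendsto (c : ℝ) : Tendsto (fun ρ : ℝ => Real.exp (c ^ 2) *
      (-(Real.sqrt (c ^ 2 + ρ ^ 2) * Real.exp (-(c ^ 2 + ρ ^ 2))) / 2
        + Real.sqrt π / 4 * erf (Real.sqrt (c ^ 2 + ρ ^ 2)))) atTop
      (𝓝 (Real.exp (c ^ 2) * (-(0:ℝ) / 2 + Real.sqrt π / 4 * 1))) := by
  have t1 : Tendsto (fun ρ : ℝ => Real.sqrt (c ^ 2 + ρ ^ 2)
      * Real.exp (-(c ^ 2 + ρ ^ 2))) atTop (𝓝 0) :=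
    sqrt_exp_tendsto_zero.comp (sq_add_tendsto c)
  have t2 : Tendsto (fun ρ : ℝ => erf (Real.sqrt (c ^ 2 + ρ ^ 2))) atTop (𝓝 1) :=
    tendsto_erf_atTop.comp (sqrt_tendsto_atTop.comp (sq_add_tendsto c))
  exact ((t1.neg.div_const 2).add (t2.const_mul _)).const_mul _

lemma radial2_integral (c : ℝ) (hc : c ≠ 0) :
    ∫ ρ in Ioi (0:ℝ), ρ * (Real.sqrt (c ^ 2 + ρ ^ 2) * Real.exp (-ρ ^ 2))
      = |c| / 2 + Real.sqrt π / 4 * Real.exp (c ^ 2) * (1 - erf |c|) := by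
  have h := integral_Ioi_of_hasDerivAt_of_nonneg'
    (fun ρ _ => radial2_hasDerivAt c hc ρ)
    (fun ρ hρ => mul_nonneg (le_of_lt hρ) (by positivity)) (radial2_tendsto c)
  rw [h]
  have h0 : Real.sqrt (c ^ 2 + 0 ^ 2) = |c| := by
    rw [show c ^ 2 + 0 ^ 2 = c ^ 2 by ring, Real.sqrt_sq_eq_abs]
  rw [h0]
  have hE : Real.exp (c ^ 2) * Real.exp (-(c ^ 2 + 0 ^ 2)) = 1 := by
    rw [← Real.exp_add]; norm_num
  have : Real.exp (c ^ 2) * (-(|c| * Real.exp (-(c ^ 2 + 0 ^ 2))) / 2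
      + Real.sqrt π / 4 * erf |c|)
      = -(|c|) / 2 + Real.exp (c ^ 2) * (Real.sqrt π / 4) * erf |c| := by
    linear_combination (-(|c|) / 2) * hE
  rw [this]
  ring

lemma erf_continuous : Continuous erf :=
  continuous_iff_continuousAt.2 fun x => (erf_hasDerivAt x).continuousAt

lemma id_mul_gauss_integrable : Integrable (fun a : ℝ => a * Real.exp (-a ^ 2)) := by
  simpa using integrable_mul_exp_neg_mul_sq (b := 1) one_pos

lemma linear_gauss_integrable (s t : ℝ) :
    Integrable (fun a : ℝ => (s - t * a) * Real.exp (-a ^ 2)) := by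
  have h1 := gauss_integrable.const_mul s
  have h2 := id_mul_gauss_integrable.const_mul t
  apply (h1.sub h2).congr
  filter_upwards with a
  simp only [Pi.sub_apply]
  ring

lemma sq_tendsto_atBot : Tendsto (fun a : ℝ => a ^ 2) atBot atTop := by
  have h : Tendsto (fun x : ℝ => x ^ 2) atTop atTop := tendsto_pow_atTop two_ne_zero
  have := h.comp tendsto_neg_atBot_atTop
  apply this.congr
  intro a
  simp [Function.comp, neg_sq]

lemma gauss_tendsto_atBot : Tendsto (fun a : ℝ => Real.exp (-a ^ 2)) atBot (𝓝 0) :=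
  Real.tendsto_exp_atBot.comp (tendsto_neg_atTop_atBot.comp sq_tendsto_atBot)

lemma gauss_tendsto_atTop : Tendsto (fun a : ℝ => Real.exp (-a ^ 2)) atTop (𝓝 0) :=
  Real.tendsto_exp_atBot.comp
    (tendsto_neg_atTop_atBot.comp (tendsto_pow_atTop (α := ℝ) two_ne_zero))

lemma exp_lin_tendsto {r : ℝ} (hr : 0 < r) :
    Tendsto (fun a : ℝ => Real.exp (r ^ 2 - 2 * r * a)) atTop (𝓝 0) := by
  apply Real.tendsto_exp_atBot.comp
  have h1 : Tendsto (fun a : ℝ => 2 * r * a) atTop atTop :=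
    Tendsto.const_mul_atTop (by positivity) tendsto_id
  have h2 : Tendsto (fun a : ℝ => -(2 * r * a)) atTop atBot :=
    tendsto_neg_atTop_atBot.comp h1
  have := tendsto_atBot_add_const_left atTop (r ^ 2) h2
  apply this.congr
  intro a
  ring

-- part A over Iic r
lemma partA_Iic (r : ℝ) :
    ∫ a in Iic r, (r - a) * Real.exp (-a ^ 2)
      = Real.sqrt π / 2 * r * (erf r + 1) + Real.exp (-r ^ 2) / 2 := by
  have hd : ∀ a ∈ Iic r, HasDerivAt
      (fun a => r * (Real.sqrt π / 2) * erf a + Real.exp (-a ^ 2) / 2)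
      ((r - a) * Real.exp (-a ^ 2)) a := by
    intro a _
    have h1 := (erf_hasDerivAt a).const_mul (r * (Real.sqrt π / 2))
    have h2 : HasDerivAt (fun a : ℝ => -a ^ 2) (-(2 * a)) a := by
      simpa using (hasDerivAt_pow 2 a).fun_neg
    have h3 := (h2.exp).div_const 2
    have := h1.add h3
    refine this.congr_deriv (Eq.symm ?_)
    have hπ : Real.sqrt π ≠ 0 := by positivity
    field_simp
    ring
  have hlim : Tendsto (fun a => r * (Real.sqrt π / 2) * erf a + Real.exp (-a ^ 2) / 2)
      atBot (𝓝 (r * (Real.sqrt π / 2) * (-1) + 0 / 2)) :=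
    (tendsto_erf_atBot.const_mul _).add (gauss_tendsto_atBot.div_const 2)
  have hint : IntegrableOn (fun a => (r - a) * Real.exp (-a ^ 2)) (Iic r) := by
    simpa using (linear_gauss_integrable r 1).integrableOn
  rw [integral_Iic_of_hasDerivAt_of_tendsto' hd hint hlim]
  simp
  ring

-- part A over Ioi r
lemma partA_Ioi (r : ℝ) :
    ∫ a in Ioi r, (a - r) * Real.exp (-a ^ 2)
      = Real.exp (-r ^ 2) / 2 + Real.sqrt π / 2 * r * (erf r - 1) := by
  have hd : ∀ a ∈ Ici r, HasDerivAt
      (fun a => -(Real.exp (-a ^ 2)) / 2 - r * (Real.sqrt π / 2) * erf a)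
      ((a - r) * Real.exp (-a ^ 2)) a := by
    intro a _
    have h1 := (erf_hasDerivAt a).const_mul (r * (Real.sqrt π / 2))
    have h2 : HasDerivAt (fun a : ℝ => -a ^ 2) (-(2 * a)) a := by
      simpa using (hasDerivAt_pow 2 a).fun_neg
    have h3 := (h2.exp).neg.div_const 2
    have := h3.sub h1
    refine this.congr_deriv (Eq.symm ?_)
    have hπ : Real.sqrt π ≠ 0 := by positivity
    field_simp
  have hlim : Tendsto (fun a => -(Real.exp (-a ^ 2)) / 2 - r * (Real.sqrt π / 2) * erf a)
      atTop (𝓝 (-(0:ℝ) / 2 - r * (Real.sqrt π / 2) * 1)) :=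
    (gauss_tendsto_atTop.neg.div_const 2).sub (tendsto_erf_atTop.const_mul _)
  have hpos : ∀ a ∈ Ioi r, 0 ≤ (a - r) * Real.exp (-a ^ 2) := by
    intro a ha
    have : r < a := ha
    have h1 : 0 ≤ a - r := by linarith
    positivity
  rw [integral_Ioi_of_hasDerivAt_of_nonneg' hd hpos hlim]
  simp [erf_zero]
  ring

lemma exp_lin_hasDerivAt (r a : ℝ) :
    HasDerivAt (fun a : ℝ => Real.exp (r ^ 2 - 2 * r * a))
      (Real.exp (r ^ 2 - 2 * r * a) * (-(2 * r))) a := by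
  have h : HasDerivAt (fun a : ℝ => r ^ 2 - 2 * r * a) (-(2 * r)) a := by
    simpa using ((hasDerivAt_id a).const_mul (2 * r)).const_sub (r ^ 2)
  exact h.exp

lemma erf_sub_hasDerivAt (r a : ℝ) :
    HasDerivAt (fun a : ℝ => erf (a - r))
      (2 / Real.sqrt π * Real.exp (-(a - r) ^ 2)) a := by
  have := (erf_hasDerivAt (a - r)).comp a ((hasDerivAt_id a).sub_const r)
  exact this.congr_deriv (mul_one _)

lemma erf_rsub_hasDerivAt (r a : ℝ) :
    HasDerivAt (fun a : ℝ => erf (r - a))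
      (-(2 / Real.sqrt π * Real.exp (-(r - a) ^ 2))) a := by
  have h : HasDerivAt (fun a : ℝ => r - a) (-1 : ℝ) a := by
    simpa using (hasDerivAt_id a).const_sub r
  have := (erf_hasDerivAt (r - a)).comp a h
  refine this.congr_deriv (Eq.symm ?_)
  ring

-- part B over Ioi r
lemma partB_Ioi {r : ℝ} (hr : 0 < r) :
    ∫ a in Ioi r, Real.exp (r ^ 2 - 2 * r * a) * (1 - erf (a - r))
      = 1 / (2 * r) * (Real.exp (-r ^ 2) + erf r - 1) := by
  have hd : ∀ a ∈ Ici r, HasDerivAt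
      (fun a => -(1 / (2 * r)) * (Real.exp (r ^ 2 - 2 * r * a) * (1 - erf (a - r)) + erf a))
      (Real.exp (r ^ 2 - 2 * r * a) * (1 - erf (a - r))) a := by
    intro a _
    have h1 := (exp_lin_hasDerivAt r a).mul ((erf_sub_hasDerivAt r a).const_sub 1)
    have h2 := (h1.add (erf_hasDerivAt a)).const_mul (-(1 / (2 * r)))
    refine h2.congr_deriv (Eq.symm ?_)
    have hE : Real.exp (r ^ 2 - 2 * r * a) * Real.exp (-(a - r) ^ 2)
        = Real.exp (-a ^ 2) := by
      rw [← Real.exp_add]; ring_nf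
    have hπ : Real.sqrt π ≠ 0 := by positivity
    rw [← hE]
    field_simp
    ring
  have hpos : ∀ a ∈ Ioi r, 0 ≤ Real.exp (r ^ 2 - 2 * r * a) * (1 - erf (a - r)) :=
    fun a _ => mul_nonneg (Real.exp_pos _).le (one_sub_erf_nonneg _)
  have hlim : Tendsto
      (fun a => -(1 / (2 * r)) * (Real.exp (r ^ 2 - 2 * r * a) * (1 - erf (a - r)) + erf a))
      atTop (𝓝 (-(1 / (2 * r)) * (0 + 1))) := by
    have t1 : Tendsto (fun a => Real.exp (r ^ 2 - 2 * r * a) * (1 - erf (a - r))) atTop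
        (𝓝 0) := by
      have hb1 : ∀ᶠ a in (atTop : Filter ℝ),
          0 ≤ Real.exp (r ^ 2 - 2 * r * a) * (1 - erf (a - r)) := by
        filter_upwards with a
        exact mul_nonneg (Real.exp_pos _).le (one_sub_erf_nonneg _)
      have hb2 : ∀ᶠ a in (atTop : Filter ℝ),
          Real.exp (r ^ 2 - 2 * r * a) * (1 - erf (a - r))
            ≤ Real.exp (r ^ 2 - 2 * r * a) * 2 := by
        filter_upwards with a
        exact mul_le_mul_of_nonneg_left
          (by linarith [neg_one_le_erf (a - r)]) (Real.exp_pos _).le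
      exact squeeze_zero' hb1 hb2 (by simpa using (exp_lin_tendsto hr).mul_const 2)
    have t2 : Tendsto (fun a : ℝ => erf a) atTop (𝓝 1) := tendsto_erf_atTop
    exact ((t1.add t2).const_mul _)
  rw [integral_Ioi_of_hasDerivAt_of_nonneg' hd hpos hlim]
  have h0 : r - r = 0 := by ring
  rw [show r ^ 2 - 2 * r * r = -r ^ 2 by ring, h0, erf_zero]
  field_simp
  ring

lemma partB_Ioi_integrableOn {r : ℝ} (hr : 0 < r) :
    IntegrableOn (fun a => Real.exp (r ^ 2 - 2 * r * a) * (1 - erf (a - r))) (Ioi r) := by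
  have hd : ∀ a ∈ Ici r, HasDerivAt
      (fun a => -(1 / (2 * r)) * (Real.exp (r ^ 2 - 2 * r * a) * (1 - erf (a - r)) + erf a))
      (Real.exp (r ^ 2 - 2 * r * a) * (1 - erf (a - r))) a := by
    intro a _
    have h1 := (exp_lin_hasDerivAt r a).mul ((erf_sub_hasDerivAt r a).const_sub 1)
    have h2 := (h1.add (erf_hasDerivAt a)).const_mul (-(1 / (2 * r)))
    refine h2.congr_deriv (Eq.symm ?_)
    have hE : Real.exp (r ^ 2 - 2 * r * a) * Real.exp (-(a - r) ^ 2)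
        = Real.exp (-a ^ 2) := by
      rw [← Real.exp_add]; ring_nf
    have hπ : Real.sqrt π ≠ 0 := by positivity
    rw [← hE]
    field_simp
    ring
  have hpos : ∀ a ∈ Ioi r, 0 ≤ Real.exp (r ^ 2 - 2 * r * a) * (1 - erf (a - r)) :=
    fun a _ => mul_nonneg (Real.exp_pos _).le (one_sub_erf_nonneg _)
  have hlim : Tendsto
      (fun a => -(1 / (2 * r)) * (Real.exp (r ^ 2 - 2 * r * a) * (1 - erf (a - r)) + erf a))
      atTop (𝓝 (-(1 / (2 * r)) * (0 + 1))) := by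
    have t1 : Tendsto (fun a => Real.exp (r ^ 2 - 2 * r * a) * (1 - erf (a - r))) atTop
        (𝓝 0) := by
      have hb1 : ∀ᶠ a in (atTop : Filter ℝ),
          0 ≤ Real.exp (r ^ 2 - 2 * r * a) * (1 - erf (a - r)) := by
        filter_upwards with a
        exact mul_nonneg (Real.exp_pos _).le (one_sub_erf_nonneg _)
      have hb2 : ∀ᶠ a in (atTop : Filter ℝ),
          Real.exp (r ^ 2 - 2 * r * a) * (1 - erf (a - r))
            ≤ Real.exp (r ^ 2 - 2 * r * a) * 2 := by
        filter_upwards with a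
        exact mul_le_mul_of_nonneg_left
          (by linarith [neg_one_le_erf (a - r)]) (Real.exp_pos _).le
      exact squeeze_zero' hb1 hb2 (by simpa using (exp_lin_tendsto hr).mul_const 2)
    exact ((t1.add tendsto_erf_atTop).const_mul _)
  exact integrableOn_Ioi_deriv_of_nonneg' hd hpos hlim

-- part B over Iic r
lemma partB_Iic_integrableOn {r : ℝ} (hr : 0 < r) :
    IntegrableOn (fun a => Real.exp (r ^ 2 - 2 * r * a) * (1 - erf (r - a))) (Iic r) := by
  apply Integrable.mono' (gauss_integrable.integrableOn)
  · apply Continuous.aestronglyMeasurable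
    exact (Real.continuous_exp.comp (by continuity)).mul
      (continuous_const.sub (erf_continuous.comp (by continuity)))
  · filter_upwards [ae_restrict_mem measurableSet_Iic] with a ha
    rw [Real.norm_eq_abs, abs_of_nonneg
      (mul_nonneg (Real.exp_pos _).le (one_sub_erf_nonneg _))]
    have hra : (0:ℝ) ≤ r - a := by have : a ≤ r := ha; linarith
    calc Real.exp (r ^ 2 - 2 * r * a) * (1 - erf (r - a))
        ≤ Real.exp (r ^ 2 - 2 * r * a) * Real.exp (-(r - a) ^ 2) :=
          mul_le_mul_of_nonneg_left (one_sub_erf_le _ hra) (Real.exp_pos _).le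
      _ = Real.exp (-a ^ 2) := by rw [← Real.exp_add]; ring_nf

lemma partB_Iic {r : ℝ} (hr : 0 < r) :
    ∫ a in Iic r, Real.exp (r ^ 2 - 2 * r * a) * (1 - erf (r - a))
      = 1 / (2 * r) * (1 + erf r - Real.exp (-r ^ 2)) := by
  have hd : ∀ a ∈ Iic r, HasDerivAt
      (fun a => -(1 / (2 * r)) * (Real.exp (r ^ 2 - 2 * r * a) * (1 - erf (r - a)) - erf a))
      (Real.exp (r ^ 2 - 2 * r * a) * (1 - erf (r - a))) a := by
    intro a _
    have h1 := (exp_lin_hasDerivAt r a).mul ((erf_rsub_hasDerivAt r a).const_sub 1)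
    have h2 := (h1.sub (erf_hasDerivAt a)).const_mul (-(1 / (2 * r)))
    refine h2.congr_deriv (Eq.symm ?_)
    have hE : Real.exp (r ^ 2 - 2 * r * a) * Real.exp (-(r - a) ^ 2)
        = Real.exp (-a ^ 2) := by
      rw [← Real.exp_add]; ring_nf
    have hπ : Real.sqrt π ≠ 0 := by positivity
    rw [← hE]
    field_simp
    ring
  have hlim : Tendsto
      (fun a => -(1 / (2 * r)) * (Real.exp (r ^ 2 - 2 * r * a) * (1 - erf (r - a)) - erf a))
      atBot (𝓝 (-(1 / (2 * r)) * (0 - (-1)))) := by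
    have t1 : Tendsto (fun a => Real.exp (r ^ 2 - 2 * r * a) * (1 - erf (r - a))) atBot
        (𝓝 0) := by
      have hb1 : ∀ᶠ a in (atBot : Filter ℝ),
          0 ≤ Real.exp (r ^ 2 - 2 * r * a) * (1 - erf (r - a)) := by
        filter_upwards with a
        exact mul_nonneg (Real.exp_pos _).le (one_sub_erf_nonneg _)
      have hb2 : ∀ᶠ a in (atBot : Filter ℝ),
          Real.exp (r ^ 2 - 2 * r * a) * (1 - erf (r - a)) ≤ Real.exp (-a ^ 2) := by
        filter_upwards [eventually_le_atBot r] with a ha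
        have hra : (0:ℝ) ≤ r - a := by linarith
        calc Real.exp (r ^ 2 - 2 * r * a) * (1 - erf (r - a))
            ≤ Real.exp (r ^ 2 - 2 * r * a) * Real.exp (-(r - a) ^ 2) :=
              mul_le_mul_of_nonneg_left (one_sub_erf_le _ hra) (Real.exp_pos _).le
          _ = Real.exp (-a ^ 2) := by rw [← Real.exp_add]; ring_nf
      exact squeeze_zero' hb1 hb2 gauss_tendsto_atBot
    exact ((t1.sub tendsto_erf_atBot).const_mul _)
  rw [integral_Iic_of_hasDerivAt_of_tendsto' hd (partB_Iic_integrableOn hr) hlim]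
  rw [show r ^ 2 - 2 * r * r = -r ^ 2 by ring, show r - r = 0 by ring, erf_zero]
  field_simp
  ring

lemma reflect_integral (x : EuclideanSpace ℝ (Fin 3)) (x0 : EuclideanSpace ℝ (Fin 3)) (h : ‖x‖ = ‖x0‖) :
    ∫ y : EuclideanSpace ℝ (Fin 3), ‖x - y‖ * Real.exp (-‖y‖ ^ 2)
      = ∫ y : EuclideanSpace ℝ (Fin 3), ‖x0 - y‖ * Real.exp (-‖y‖ ^ 2) := by
  set T := Submodule.reflection (ℝ ∙ (x - x0))ᗮ with hT
  have hTx : T x = x0 := Submodule.reflection_sub h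
  have hinv : ∀ y, T (T y) = y := fun y => Submodule.reflection_reflection _ y
  have hmp : MeasurePreserving T := T.measurePreserving
  have := hmp.integral_comp T.toHomeomorph.toMeasurableEquiv.measurableEmbedding
    (fun y => ‖x0 - y‖ * Real.exp (-‖y‖ ^ 2))
  rw [← this]
  apply integral_congr_ae
  filter_upwards with y
  have h1 : x0 - T y = T (x - y) := by
    rw [← hTx, ← map_sub]
  rw [h1, T.norm_map, T.norm_map]

noncomputable def eqv3 : (ℝ × (Fin 2 → ℝ)) ≃ᵐ EuclideanSpace ℝ (Fin 3) :=
  ((MeasurableEquiv.piFinSuccAbove (fun _ : Fin 3 => ℝ) 0).symm).trans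
    ((MeasurableEquiv.toLp 2 (Fin 3 → ℝ)).symm).symm

lemma eqv3_mp : MeasurePreserving (eqv3) :=
  ((EuclideanSpace.volume_preserving_symm_measurableEquiv_toLp (Fin 3)).symm).comp
    ((volume_preserving_piFinSuccAbove (fun _ : Fin 3 => ℝ) 0).symm _)

lemma eqv3_apply0 (a : ℝ) (w : Fin 2 → ℝ) : (eqv3 (a, w)) 0 = a := rfl
lemma eqv3_apply1 (a : ℝ) (w : Fin 2 → ℝ) : (eqv3 (a, w)) 1 = w 0 := rfl
lemma eqv3_apply2 (a : ℝ) (w : Fin 2 → ℝ) : (eqv3 (a, w)) 2 = w 1 := rfl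

lemma norm_eqv3 (a : ℝ) (w : Fin 2 → ℝ) :
    ‖eqv3 (a, w)‖ ^ 2 = a ^ 2 + ((w 0) ^ 2 + (w 1) ^ 2) := by
  rw [EuclideanSpace.norm_eq]
  rw [Real.sq_sqrt (by positivity)]
  rw [Fin.sum_univ_three]
  rw [eqv3_apply0, eqv3_apply1, eqv3_apply2]
  simp [sq_abs]
  ring

lemma norm_sub_eqv3 (x0 : EuclideanSpace ℝ (Fin 3)) (a : ℝ) (w : Fin 2 → ℝ) :
    ‖x0 - eqv3 (a, w)‖
      = Real.sqrt ((x0 0 - a) ^ 2 + ((x0 1 - w 0) ^ 2 + (x0 2 - w 1) ^ 2)) := by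
  rw [EuclideanSpace.norm_eq, Fin.sum_univ_three]
  simp only [PiLp.sub_apply, Real.norm_eq_abs, sq_abs]
  rw [eqv3_apply0, eqv3_apply1, eqv3_apply2]
  ring_nf

lemma e2_transfer (g : EuclideanSpace ℝ (Fin 2) → ℝ) :
    ∫ w : Fin 2 → ℝ, g (((MeasurableEquiv.toLp 2 (Fin 2 → ℝ)).symm).symm w)
      = ∫ z : EuclideanSpace ℝ (Fin 2), g z :=
  ((EuclideanSpace.volume_preserving_symm_measurableEquiv_toLp (Fin 2)).symm).integral_comp' g

lemma e2_symm_apply (w : Fin 2 → ℝ) (i : Fin 2) :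
    (((MeasurableEquiv.toLp 2 (Fin 2 → ℝ)).symm).symm w) i = w i := rfl

lemma norm_e2_symm (w : Fin 2 → ℝ) :
    ‖((MeasurableEquiv.toLp 2 (Fin 2 → ℝ)).symm).symm w‖ ^ 2 = (w 0) ^ 2 + (w 1) ^ 2 := by
  rw [EuclideanSpace.norm_eq, Real.sq_sqrt (by positivity), Fin.sum_univ_two]
  simp [e2_symm_apply, sq_abs]

lemma gauss3_integrable {b : ℝ} (hb : 0 < b) :
    Integrable (fun y : EuclideanSpace ℝ (Fin 3) => Real.exp (-b * ‖y‖ ^ 2)) := by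
  have h := (GaussianFourier.integrable_cexp_neg_mul_sq_norm_add
    (V := EuclideanSpace ℝ (Fin 3)) (b := (b : ℂ)) (by simpa using hb) 0 0).re
  apply h.congr
  filter_upwards with v
  simp only [zero_mul, add_zero, RCLike.re_to_complex]
  rw [show -(b:ℂ) * (‖v‖:ℂ) ^ 2 = ((-b * ‖v‖ ^ 2 : ℝ) : ℂ) by push_cast; ring,
    Complex.exp_ofReal_re]

lemma t_exp_bound (t : ℝ) (ht : 0 ≤ t) :
    t * Real.exp (-t ^ 2) ≤ Real.exp (-(1/2) * t ^ 2) := by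
  have h1 : t ≤ Real.exp ((1/2) * t ^ 2) := by
    nlinarith [Real.add_one_le_exp ((1/2) * t ^ 2)]
  calc t * Real.exp (-t ^ 2) ≤ Real.exp ((1/2) * t ^ 2) * Real.exp (-t ^ 2) :=
        mul_le_mul_of_nonneg_right h1 (Real.exp_pos _).le
    _ = Real.exp (-(1/2) * t ^ 2) := by rw [← Real.exp_add]; ring_nf

lemma integrand_integrable (x0 : EuclideanSpace ℝ (Fin 3)) :
    Integrable (fun y : EuclideanSpace ℝ (Fin 3) => ‖x0 - y‖ * Real.exp (-‖y‖ ^ 2)) := by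
  have h1 := (gauss3_integrable one_pos).const_mul ‖x0‖
  have h2 := gauss3_integrable (b := 1/2) (by norm_num)
  apply Integrable.mono' (h1.add h2)
  · apply Continuous.aestronglyMeasurable
    exact ((continuous_const.sub continuous_id).norm).mul
      (Real.continuous_exp.comp (continuous_norm.pow 2).neg)
  · filter_upwards with y
    rw [Real.norm_eq_abs, abs_of_nonneg (by positivity)]
    have hb : ‖x0 - y‖ ≤ ‖x0‖ + ‖y‖ := norm_sub_le _ _
    have h3 : ‖y‖ * Real.exp (-‖y‖ ^ 2) ≤ Real.exp (-(1/2) * ‖y‖ ^ 2) :=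
      t_exp_bound _ (norm_nonneg _)
    have h4 : -‖y‖ ^ 2 = -1 * ‖y‖ ^ 2 := by ring
    calc ‖x0 - y‖ * Real.exp (-‖y‖ ^ 2)
        ≤ (‖x0‖ + ‖y‖) * Real.exp (-‖y‖ ^ 2) :=
          mul_le_mul_of_nonneg_right hb (Real.exp_pos _).le
      _ = ‖x0‖ * Real.exp (-‖y‖ ^ 2) + ‖y‖ * Real.exp (-‖y‖ ^ 2) := by ring
      _ ≤ ‖x0‖ * Real.exp (-1 * ‖y‖ ^ 2) + Real.exp (-(1/2) * ‖y‖ ^ 2) := by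
          rw [← h4]
          exact add_le_add le_rfl h3


lemma inner2 (c : ℝ) (hc : c ≠ 0) :
    ∫ z : EuclideanSpace ℝ (Fin 2),
        Real.sqrt (c ^ 2 + ‖z‖ ^ 2) * Real.exp (-‖z‖ ^ 2)
      = π * |c| + π * Real.sqrt π / 2 * (Real.exp (c ^ 2) * (1 - erf |c|)) := by
  have h := integral_fun_norm_addHaar (volume : Measure (EuclideanSpace ℝ (Fin 2)))
    (fun ρ => Real.sqrt (c ^ 2 + ρ ^ 2) * Real.exp (-ρ ^ 2))
  rw [h, finrank_euclideanSpace_fin]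
  have hb : (volume (Metric.ball (0 : EuclideanSpace ℝ (Fin 2)) 1)).toReal = π := by
    rw [EuclideanSpace.volume_ball]
    rw [Fintype.card_fin]
    norm_num
    exact Real.sq_sqrt Real.pi_nonneg
  rw [measureReal_def, hb]
  have : ∫ ρ in Ioi (0:ℝ), ρ ^ (2 - 1) •
      (Real.sqrt (c ^ 2 + ρ ^ 2) * Real.exp (-ρ ^ 2))
      = |c| / 2 + Real.sqrt π / 4 * Real.exp (c ^ 2) * (1 - erf |c|) := by
    rw [← radial2_integral c hc]
    apply setIntegral_congr_fun measurableSet_Ioi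
    intro ρ _
    simp [smul_eq_mul]
  rw [this]
  simp only [smul_eq_mul, nsmul_eq_mul]
  push_cast
  ring

lemma reduce (r : ℝ) :
    ∫ y : EuclideanSpace ℝ (Fin 3),
        ‖EuclideanSpace.single (0 : Fin 3) r - y‖ * Real.exp (-‖y‖ ^ 2)
      = ∫ a : ℝ, Real.exp (-a ^ 2) *
          ∫ z : EuclideanSpace ℝ (Fin 2),
            Real.sqrt ((r - a) ^ 2 + ‖z‖ ^ 2) * Real.exp (-‖z‖ ^ 2) := by
  set x0 : EuclideanSpace ℝ (Fin 3) := EuclideanSpace.single (0 : Fin 3) r with hx0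
  set F : EuclideanSpace ℝ (Fin 3) → ℝ :=
    fun y => ‖x0 - y‖ * Real.exp (-‖y‖ ^ 2) with hF
  have hint : Integrable F := integrand_integrable x0
  have hKi : Integrable (F ∘ eqv3) :=
    (eqv3_mp.integrable_comp_emb eqv3.measurableEmbedding).2 hint
  have hKi' : Integrable (F ∘ eqv3) (volume.prod volume) := by
    rwa [← Measure.volume_eq_prod]
  have hcomp : ∫ y, F y = ∫ p : ℝ × (Fin 2 → ℝ), F (eqv3 p) :=
    (eqv3_mp.integral_comp' F).symm
  rw [hcomp]
  have : ∫ p : ℝ × (Fin 2 → ℝ), F (eqv3 p)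
      = ∫ a : ℝ, ∫ w : Fin 2 → ℝ, F (eqv3 (a, w)) := by
    rw [Measure.volume_eq_prod]
    exact integral_prod _ hKi'
  rw [this]
  apply integral_congr_ae
  filter_upwards with a
  have hx00 : x0 0 = r := by simp [hx0, EuclideanSpace.single_apply]
  have hx01 : x0 1 = 0 := by simp [hx0, EuclideanSpace.single_apply]
  have hx02 : x0 2 = 0 := by simp [hx0, EuclideanSpace.single_apply]
  have step1 : ∀ w : Fin 2 → ℝ, F (eqv3 (a, w))
      = Real.exp (-a ^ 2) * (Real.sqrt ((r - a) ^ 2 + ((w 0) ^ 2 + (w 1) ^ 2))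
          * Real.exp (-((w 0) ^ 2 + (w 1) ^ 2))) := by
    intro w
    rw [hF]
    simp only
    rw [norm_sub_eqv3, hx00, hx01, hx02]
    have hn : ‖eqv3 (a, w)‖ ^ 2 = a ^ 2 + ((w 0) ^ 2 + (w 1) ^ 2) := norm_eqv3 a w
    rw [hn]
    rw [show -(a ^ 2 + (w 0 ^ 2 + w 1 ^ 2)) = (-a ^ 2) + (-(w 0 ^ 2 + w 1 ^ 2)) by ring,
      Real.exp_add]
    rw [show (0 - w 0) ^ 2 = w 0 ^ 2 by ring, show (0 - w 1) ^ 2 = w 1 ^ 2 by ring]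
    ring
  rw [integral_congr_ae (Filter.Eventually.of_forall step1)]
  rw [MeasureTheory.integral_const_mul]
  congr 1
  have step2 : ∀ w : Fin 2 → ℝ,
      Real.sqrt ((r - a) ^ 2 + ((w 0) ^ 2 + (w 1) ^ 2))
          * Real.exp (-((w 0) ^ 2 + (w 1) ^ 2))
      = (fun z : EuclideanSpace ℝ (Fin 2) =>
          Real.sqrt ((r - a) ^ 2 + ‖z‖ ^ 2) * Real.exp (-‖z‖ ^ 2))
          (((MeasurableEquiv.toLp 2 (Fin 2 → ℝ)).symm).symm w) := by
    intro w
    simp only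
    rw [norm_e2_symm]
  rw [integral_congr_ae (Filter.Eventually.of_forall step2)]
  exact e2_transfer (fun z => Real.sqrt ((r - a) ^ 2 + ‖z‖ ^ 2) * Real.exp (-‖z‖ ^ 2))

/-- In dimension 3, the biharmonic potential of the Gaussian equals
`-e^{-|x|²}/8 - (√π/16)(erf|x|/|x|)(2|x|²+1)` for `x ≠ 0`. -/
theorem biharmonic3_gaussian (x : EuclideanSpace ℝ (Fin 3)) (hx : x ≠ 0) :
    -(1 / (8 * Real.pi)) *
      (∫ y : EuclideanSpace ℝ (Fin 3), ‖x - y‖ * Real.exp (-‖y‖ ^ 2)) =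
    -Real.exp (-‖x‖ ^ 2) / 8 -
      (Real.sqrt Real.pi / 16) * (erf ‖x‖ / ‖x‖) * (2 * ‖x‖ ^ 2 + 1) := by
  set r : ℝ := ‖x‖ with hrdef
  have hr0 : 0 < r := by
    rw [hrdef]
    exact norm_pos_iff.2 hx
  have hrne : r ≠ 0 := hr0.ne'
  have hnorm : ‖x‖ = ‖EuclideanSpace.single (0 : Fin 3) r‖ := by
    rw [EuclideanSpace.norm_single, Real.norm_eq_abs, abs_of_pos hr0]
  rw [reflect_integral x (EuclideanSpace.single (0 : Fin 3) r) hnorm, reduce r]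
  have hs : ∀ᵐ a : ℝ, a ≠ r := by
    rw [ae_iff]
    simp only [not_not, Set.setOf_eq_eq_singleton]
    exact measure_singleton r
  have hae : ∀ᵐ a : ℝ, Real.exp (-a ^ 2) *
        ∫ z : EuclideanSpace ℝ (Fin 2),
          Real.sqrt ((r - a) ^ 2 + ‖z‖ ^ 2) * Real.exp (-‖z‖ ^ 2)
      = π * (|r - a| * Real.exp (-a ^ 2))
        + π * Real.sqrt π / 2 *
          (Real.exp (r ^ 2 - 2 * r * a) * (1 - erf |r - a|)) := by
    filter_upwards [hs] with a ha
    rw [inner2 (r - a) (sub_ne_zero.2 (Ne.symm ha))]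
    have hE : Real.exp (-a ^ 2) * Real.exp ((r - a) ^ 2)
        = Real.exp (r ^ 2 - 2 * r * a) := by
      rw [← Real.exp_add]; ring_nf
    linear_combination (π * Real.sqrt π / 2 * (1 - erf |r - a|)) * hE
  rw [integral_congr_ae hae]
  have hA_Iic : IntegrableOn (fun a => |r - a| * Real.exp (-a ^ 2)) (Iic r) := by
    apply ((linear_gauss_integrable r 1).integrableOn).congr_fun ?_ measurableSet_Iic
    intro a ha
    have : a ≤ r := ha
    dsimp only
    rw [abs_of_nonneg (by linarith : (0:ℝ) ≤ r - a), one_mul]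
  have hA_Ioi : IntegrableOn (fun a => |r - a| * Real.exp (-a ^ 2)) (Ioi r) := by
    apply ((linear_gauss_integrable (-r) (-1)).integrableOn).congr_fun ?_ measurableSet_Ioi
    intro a ha
    have : r < a := ha
    dsimp only
    rw [abs_of_nonpos (by linarith : r - a ≤ 0)]
    ring_nf
  have hB_Iic : IntegrableOn
      (fun a => Real.exp (r ^ 2 - 2 * r * a) * (1 - erf |r - a|)) (Iic r) := by
    apply (partB_Iic_integrableOn hr0).congr_fun ?_ measurableSet_Iic
    intro a ha
    have : a ≤ r := ha
    dsimp only
    rw [abs_of_nonneg (by linarith : (0:ℝ) ≤ r - a)]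
  have hB_Ioi : IntegrableOn
      (fun a => Real.exp (r ^ 2 - 2 * r * a) * (1 - erf |r - a|)) (Ioi r) := by
    apply (partB_Ioi_integrableOn hr0).congr_fun ?_ measurableSet_Ioi
    intro a ha
    have : r < a := ha
    dsimp only
    rw [abs_of_nonpos (by linarith : r - a ≤ 0), neg_sub]
  have hψ_Iic : IntegrableOn (fun a => π * (|r - a| * Real.exp (-a ^ 2))
      + π * Real.sqrt π / 2 *
        (Real.exp (r ^ 2 - 2 * r * a) * (1 - erf |r - a|))) (Iic r) :=
    (hA_Iic.const_mul π).add (hB_Iic.const_mul _)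
  have hψ_Ioi : IntegrableOn (fun a => π * (|r - a| * Real.exp (-a ^ 2))
      + π * Real.sqrt π / 2 *
        (Real.exp (r ^ 2 - 2 * r * a) * (1 - erf |r - a|))) (Ioi r) :=
    (hA_Ioi.const_mul π).add (hB_Ioi.const_mul _)
  rw [← intervalIntegral.integral_Iic_add_Ioi hψ_Iic hψ_Ioi]
  have eIic : ∫ a in Iic r, (π * (|r - a| * Real.exp (-a ^ 2))
      + π * Real.sqrt π / 2 *
        (Real.exp (r ^ 2 - 2 * r * a) * (1 - erf |r - a|)))
      = π * (Real.sqrt π / 2 * r * (erf r + 1) + Real.exp (-r ^ 2) / 2)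
        + π * Real.sqrt π / 2 *
          (1 / (2 * r) * (1 + erf r - Real.exp (-r ^ 2))) := by
    rw [integral_add (hA_Iic.const_mul π) (hB_Iic.const_mul _),
      MeasureTheory.integral_const_mul, MeasureTheory.integral_const_mul]
    have c1 : ∫ a in Iic r, |r - a| * Real.exp (-a ^ 2)
        = ∫ a in Iic r, (r - a) * Real.exp (-a ^ 2) := by
      apply setIntegral_congr_fun measurableSet_Iic
      intro a ha
      have : a ≤ r := ha
      dsimp only
      rw [abs_of_nonneg (by linarith : (0:ℝ) ≤ r - a)]
    have c2 : ∫ a in Iic r, Real.exp (r ^ 2 - 2 * r * a) * (1 - erf |r - a|)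
        = ∫ a in Iic r, Real.exp (r ^ 2 - 2 * r * a) * (1 - erf (r - a)) := by
      apply setIntegral_congr_fun measurableSet_Iic
      intro a ha
      have : a ≤ r := ha
      dsimp only
      rw [abs_of_nonneg (by linarith : (0:ℝ) ≤ r - a)]
    rw [c1, c2, partA_Iic r, partB_Iic hr0]
  have eIoi : ∫ a in Ioi r, (π * (|r - a| * Real.exp (-a ^ 2))
      + π * Real.sqrt π / 2 *
        (Real.exp (r ^ 2 - 2 * r * a) * (1 - erf |r - a|)))
      = π * (Real.exp (-r ^ 2) / 2 + Real.sqrt π / 2 * r * (erf r - 1))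
        + π * Real.sqrt π / 2 *
          (1 / (2 * r) * (Real.exp (-r ^ 2) + erf r - 1)) := by
    rw [integral_add (hA_Ioi.const_mul π) (hB_Ioi.const_mul _),
      MeasureTheory.integral_const_mul, MeasureTheory.integral_const_mul]
    have c1 : ∫ a in Ioi r, |r - a| * Real.exp (-a ^ 2)
        = ∫ a in Ioi r, (a - r) * Real.exp (-a ^ 2) := by
      apply setIntegral_congr_fun measurableSet_Ioi
      intro a ha
      have : r < a := ha
      dsimp only
      rw [abs_of_nonpos (by linarith : r - a ≤ 0), neg_sub]
    have c2 : ∫ a in Ioi r, Real.exp (r ^ 2 - 2 * r * a) * (1 - erf |r - a|)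
        = ∫ a in Ioi r, Real.exp (r ^ 2 - 2 * r * a) * (1 - erf (a - r)) := by
      apply setIntegral_congr_fun measurableSet_Ioi
      intro a ha
      have : r < a := ha
      dsimp only
      rw [abs_of_nonpos (by linarith : r - a ≤ 0), neg_sub]
    rw [c1, c2, partA_Ioi r, partB_Ioi hr0]
  rw [eIic, eIoi]
  have hπ : (0:ℝ) < π := Real.pi_pos
  have hsπ : Real.sqrt π ≠ 0 := by positivity
  field_simp
  ring
end

section
/- In dimension 6, the biharmonic potential of the Gaussian equals (e^{-|x|²} - 1 + |x|²)/(16|x|⁴) for x ≠ 0. -/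
/-!
Write `‖x - y‖⁻² = ∫₀^∞ e^{-t ‖x - y‖²} dt` and exchange the integrals (Tonelli). Completing
the square, the inner Gaussian integral over `ℝ⁶` is `π³ (1 + t)⁻³ e^{-t ‖x‖² / (1 + t)}`, and the
substitution `s = t / (1 + t)` reduces the remaining integral to
`∫₀¹ (1 - s) e^{-a s} ds = (e^{-a} - 1 + a) / a²` with `a = ‖x‖²`. Finally `Γ(3) = 2`.
-/

open Real MeasureTheory Set Filter Topology

lemma lintegral_Ioi_exp_neg_mul {b : ℝ} (hb : 0 < b) :
    ∫⁻ t in Ioi 0, ENNReal.ofReal (exp (-(t * b))) = ENNReal.ofReal b⁻¹ := by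
  have hexp : (fun t => exp (-(t * b))) = fun t => exp (-b * t) := by
    ext t; ring_nf
  rw [← ofReal_integral_eq_lintegral_ofReal, hexp, integral_exp_mul_Ioi (neg_neg_of_pos hb)]
  · simp
  · rw [hexp]; exact integrableOn_exp_mul_Ioi (neg_neg_of_pos hb) 0
  · exact Eventually.of_forall fun t => (exp_pos _).le

lemma tendsto_div_one_add_atTop_nhds_one : Tendsto (fun t : ℝ => t / (1 + t)) atTop (𝓝 1) := by
  have h : Tendsto (fun t : ℝ => 1 - (1 + t)⁻¹) atTop (𝓝 (1 - 0)) :=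
    tendsto_const_nhds.sub
      (tendsto_inv_atTop_zero.comp (tendsto_atTop_add_const_left _ 1 tendsto_id))
  rw [sub_zero] at h
  refine h.congr' ?_
  filter_upwards [eventually_gt_atTop 0] with t ht
  field_simp
  ring

lemma hasDerivAt_div_one_add {t : ℝ} (ht : 1 + t ≠ 0) :
    HasDerivAt (fun t => t / (1 + t)) ((1 + t) ^ 2)⁻¹ t := by
  refine ((hasDerivAt_id t).div ((hasDerivAt_id t).const_add 1) ht).congr_deriv ?_
  simp only [id]
  field_simp
  ring

lemma lintegral_Ioi_inv_one_add_pow_three_mul_exp {a : ℝ} (ha : 0 < a) :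
    ∫⁻ t in Ioi 0, ENNReal.ofReal (((1 + t) ^ 3)⁻¹ * exp (-(t / (1 + t) * a))) =
      ENNReal.ofReal ((exp (-a) - 1 + a) / a ^ 2) := by
  set G : ℝ → ℝ := fun s => exp (-(s * a)) * (1 / a ^ 2 - (1 - s) / a)
  have hG : ∀ s, HasDerivAt G ((1 - s) * exp (-(s * a))) s := fun s => by
    refine (((hasDerivAt_mul_const a).neg.exp).mul
      (((hasDerivAt_id s).const_sub 1).div_const a |>.const_sub (1 / a ^ 2))).congr_deriv ?_
    simp only [Pi.neg_apply, id]
    field_simp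
    ring
  have hderiv : ∀ t ∈ Ici (0 : ℝ), HasDerivAt (fun t => G (t / (1 + t)))
      (((1 + t) ^ 3)⁻¹ * exp (-(t / (1 + t) * a))) t := fun t ht => by
    have ht : 1 + t ≠ 0 := by simp only [mem_Ici] at ht; linarith
    refine ((hG _).comp t (hasDerivAt_div_one_add ht)).congr_deriv ?_
    field_simp
    ring
  have hlim : Tendsto (fun t => G (t / (1 + t))) atTop (𝓝 (exp (-a) / a ^ 2)) := by
    have := ((by fun_prop : Continuous G).tendsto 1).comp tendsto_div_one_add_atTop_nhds_one
    simpa [G, Function.comp_def, div_eq_mul_inv] using this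
  have hpos : ∀ t ∈ Ioi (0 : ℝ), 0 ≤ ((1 + t) ^ 3)⁻¹ * exp (-(t / (1 + t) * a)) := fun t ht => by
    have : 0 < 1 + t := by simp only [mem_Ioi] at ht; linarith
    positivity
  rw [← ofReal_integral_eq_lintegral_ofReal (integrableOn_Ioi_deriv_of_nonneg' hderiv hpos hlim)
    ((ae_restrict_iff' measurableSet_Ioi).2 (Eventually.of_forall hpos)),
    integral_Ioi_of_hasDerivAt_of_nonneg' hderiv hpos hlim]
  simp only [G, zero_div, zero_mul, neg_zero, exp_zero]
  congr 1
  field_simp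
  ring

section InnerProductSpace

variable {V : Type*} [NormedAddCommGroup V] [InnerProductSpace ℝ V]

lemma sq_norm_add_mul_sq_norm_sub {t : ℝ} (ht : 1 + t ≠ 0) (x y : V) :
    ‖y‖ ^ 2 + t * ‖x - y‖ ^ 2 =
      (1 + t) * ‖y - (t / (1 + t)) • x‖ ^ 2 + t / (1 + t) * ‖x‖ ^ 2 := by
  rw [norm_sub_sq_real, norm_sub_sq_real, real_inner_smul_right, norm_smul, real_inner_comm,
    mul_pow, Real.norm_eq_abs, sq_abs]
  field_simp
  ring

variable [FiniteDimensional ℝ V] [MeasurableSpace V] [BorelSpace V]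

lemma lintegral_exp_neg_mul_sq_norm {b : ℝ} (hb : 0 < b) :
    ∫⁻ v : V, ENNReal.ofReal (exp (-b * ‖v‖ ^ 2)) =
      ENNReal.ofReal ((π / b) ^ (Module.finrank ℝ V / 2 : ℝ)) := by
  have h := GaussianFourier.integral_rexp_neg_mul_sq_norm (V := V) hb
  have hint : Integrable fun v : V => exp (-b * ‖v‖ ^ 2) :=
    Integrable.of_integral_ne_zero (by rw [h]; positivity)
  rw [← h, ofReal_integral_eq_lintegral_ofReal hint (Eventually.of_forall fun v => (exp_pos _).le)]

lemma lintegral_exp_neg_sq_norm_add_mul_sq_norm_sub {t : ℝ} (ht : 0 < 1 + t) (x : V) :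
    ∫⁻ y : V, ENNReal.ofReal (exp (-(‖y‖ ^ 2 + t * ‖x - y‖ ^ 2))) =
      ENNReal.ofReal ((π / (1 + t)) ^ (Module.finrank ℝ V / 2 : ℝ) *
        exp (-(t / (1 + t) * ‖x‖ ^ 2))) := by
  simp_rw [sq_norm_add_mul_sq_norm_sub ht.ne' x, neg_add, exp_add,
    ENNReal.ofReal_mul (exp_pos _).le]
  rw [lintegral_mul_const' _ _ ENNReal.ofReal_ne_top,
    lintegral_sub_right_eq_self (fun y => ENNReal.ofReal (exp (-((1 + t) * ‖y‖ ^ 2)))),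
    ENNReal.ofReal_mul (by positivity)]
  simp_rw [← neg_mul, lintegral_exp_neg_mul_sq_norm ht]

lemma lintegral_exp_neg_sq_norm_div_sq_norm_sub [Nontrivial V] (x : V) :
    ∫⁻ y : V, ENNReal.ofReal (exp (-‖y‖ ^ 2) / ‖x - y‖ ^ 2) =
      ∫⁻ t in Ioi 0, ENNReal.ofReal ((π / (1 + t)) ^ (Module.finrank ℝ V / 2 : ℝ) *
        exp (-(t / (1 + t) * ‖x‖ ^ 2))) := by
  have hsub : ∀ᵐ y : V, ENNReal.ofReal (exp (-‖y‖ ^ 2) / ‖x - y‖ ^ 2) =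
      ∫⁻ t in Ioi 0, ENNReal.ofReal (exp (-(‖y‖ ^ 2 + t * ‖x - y‖ ^ 2))) := by
    filter_upwards [measure_singleton x |> compl_mem_ae_iff.2] with y hy
    have hxy : 0 < ‖x - y‖ ^ 2 := by
      have : x - y ≠ 0 := sub_ne_zero.2 (Ne.symm hy)
      positivity
    simp_rw [neg_add, exp_add, ENNReal.ofReal_mul (exp_pos _).le]
    rw [lintegral_const_mul' _ _ ENNReal.ofReal_ne_top, lintegral_Ioi_exp_neg_mul hxy,
      ← ENNReal.ofReal_mul (exp_pos _).le, div_eq_mul_inv]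
  have hmeas : Measurable (Function.uncurry fun (y : V) (t : ℝ) =>
      ENNReal.ofReal (exp (-(‖y‖ ^ 2 + t * ‖x - y‖ ^ 2)))) := by
    fun_prop
  rw [lintegral_congr_ae hsub, lintegral_lintegral_swap hmeas.aemeasurable]
  refine setLIntegral_congr_fun measurableSet_Ioi fun t ht => ?_
  exact lintegral_exp_neg_sq_norm_add_mul_sq_norm_sub (by simp only [mem_Ioi] at ht; linarith) x

lemma integral_exp_neg_sq_norm_div_sq_norm_sub_of_finrank_eq_six
    (hV : Module.finrank ℝ V = 6) {x : V} (hx : x ≠ 0) :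
    ∫ y : V, exp (-‖y‖ ^ 2) / ‖x - y‖ ^ 2 =
      π ^ 3 * ((exp (-‖x‖ ^ 2) - 1 + ‖x‖ ^ 2) / (‖x‖ ^ 2) ^ 2) := by
  have : Nontrivial V := Module.nontrivial_of_finrank_eq_succ hV
  have hpow : ∀ t : ℝ, (π / (1 + t)) ^ (Module.finrank ℝ V / 2 : ℝ) =
      π ^ 3 * ((1 + t) ^ 3)⁻¹ := fun t => by
    rw [hV, show ((6 : ℕ) : ℝ) / 2 = (3 : ℕ) by norm_num, rpow_natCast, div_pow, div_eq_mul_inv]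
  have hlint : ∫⁻ y : V, ENNReal.ofReal (exp (-‖y‖ ^ 2) / ‖x - y‖ ^ 2) =
      ENNReal.ofReal (π ^ 3 * ((exp (-‖x‖ ^ 2) - 1 + ‖x‖ ^ 2) / (‖x‖ ^ 2) ^ 2)) := by
    rw [lintegral_exp_neg_sq_norm_div_sq_norm_sub, ENNReal.ofReal_mul (by positivity),
      ← lintegral_Ioi_inv_one_add_pow_three_mul_exp (by positivity : 0 < ‖x‖ ^ 2),
      ← lintegral_const_mul' _ _ ENNReal.ofReal_ne_top]
    refine setLIntegral_congr_fun measurableSet_Ioi fun t _ => ?_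
    rw [hpow t, mul_assoc, ENNReal.ofReal_mul (by positivity)]
  have hnum : 0 ≤ exp (-‖x‖ ^ 2) - 1 + ‖x‖ ^ 2 := by
    linarith [add_one_le_exp (-‖x‖ ^ 2)]
  rw [integral_eq_lintegral_of_nonneg_ae (Eventually.of_forall fun y => by positivity)
    (Measurable.aestronglyMeasurable (by fun_prop)), hlint, ENNReal.toReal_ofReal (by positivity)]

end InnerProductSpace

/-- In dimension 6, the biharmonic potential of the Gaussian equals
`(e^{-|x|²} - 1 + |x|²)/(16|x|⁴)` for `x ≠ 0`. -/
theorem biharmonic6_gaussian (x : EuclideanSpace ℝ (Fin 6)) (hx : x ≠ 0) :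
    (Real.Gamma 3 / (4 * Real.pi ^ 3 * 4 * 2)) *
      (∫ y : EuclideanSpace ℝ (Fin 6), Real.exp (-‖y‖ ^ 2) / ‖x - y‖ ^ 2) =
    (Real.exp (-‖x‖ ^ 2) - 1 + ‖x‖ ^ 2) / (16 * ‖x‖ ^ 4) := by
  have hGamma : Gamma 3 = 2 := by norm_num [Gamma_ofNat_eq_factorial]
  rw [integral_exp_neg_sq_norm_div_sq_norm_sub_of_finrank_eq_six finrank_euclideanSpace_fin hx,
    hGamma]
  have : ‖x‖ ≠ 0 := norm_ne_zero_iff.2 hx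
  field_simp
  ring
end

section
/- The radial function g(r) = (1/16)((e^{-r²}-1)/r² - E_1(r²) - 2 log r) satisfies the ODE g''(r) + (3/r) g'(r) = (e^{-r²}-1)/(4r²) for r > 0, with g'(r) = (1/8)(1/r³ - e^{-r²}/r³ - 1/r) and lim_{r→0} g(r) = (γ-1)/16, where γ is the Euler–Mascheroni constant. -/
open Real Filter

/-- The exponential integral `E₁(r) = ∫_r^∞ e^{-t}/t dt`. -/
noncomputable def expInt (r : ℝ) : ℝ := ∫ t in Set.Ioi r, Real.exp (-t) / t

/-!
Since `d/dr E₁(r²) = -2e^{-r²}/r`, the derivative of `g` is elementary, and the ODE is a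
computation with `g''`. For the limit at `0`, integrating by parts against `log` gives
`E₁(s) + log s = ∫_s^∞ log t · e^{-t} dt - ((e^{-s} - 1)/s) · s log s`, which tends to
`∫_0^∞ log t · e^{-t} dt = Γ'(1) = -γ`; with `(e^{-s} - 1)/s → -1` this gives
`g(r) → (-1 + γ)/16`.
-/

open MeasureTheory Set Topology

lemma integrableOn_exp_neg_div_Ioi {a : ℝ} (ha : 0 < a) :
    IntegrableOn (fun t => exp (-t) / t) (Ioi a) := by
  refine ((integrableOn_exp_neg_Ioi a).const_mul a⁻¹).mono'
    (by fun_prop : Measurable fun t : ℝ => exp (-t) / t).aestronglyMeasurable ?_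
  filter_upwards [ae_restrict_mem measurableSet_Ioi] with t (ht : a < t)
  rw [norm_div, norm_of_nonneg (exp_pos _).le, norm_of_nonneg (ha.trans ht).le, ← div_eq_inv_mul]
  exact div_le_div_of_nonneg_left (exp_pos _).le ha ht.le

lemma expInt_eq_intervalIntegral_add {a b : ℝ} (ha : 0 < a) (hb : 0 < b) :
    expInt a = (∫ t in a..b, exp (-t) / t) + expInt b :=
  (intervalIntegral.integral_interval_add_Ioi (integrableOn_exp_neg_div_Ioi ha)
    (integrableOn_exp_neg_div_Ioi hb)).symm

lemma hasDerivAt_expInt {r : ℝ} (hr : 0 < r) : HasDerivAt expInt (-(exp (-r) / r)) r := by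
  have hcont : ContinuousAt (fun t => exp (-t) / t) r := by fun_prop (disch := positivity)
  have hint : IntervalIntegrable (fun t => exp (-t) / t) volume r 1 :=
    ⟨(integrableOn_exp_neg_div_Ioi hr).mono_set Ioc_subset_Ioi_self,
      (integrableOn_exp_neg_div_Ioi one_pos).mono_set Ioc_subset_Ioi_self⟩
  have hmeas : Measurable fun t : ℝ => exp (-t) / t := by fun_prop
  have hprim := intervalIntegral.integral_hasDerivAt_left hint
    hmeas.stronglyMeasurable.stronglyMeasurableAtFilter hcont
  refine (hprim.add_const (expInt 1)).congr_of_eventuallyEq ?_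
  filter_upwards [Ioi_mem_nhds hr] with x hx using expInt_eq_intervalIntegral_add hx one_pos

theorem integral_log_mul_exp_neg :
    ∫ t in Ioi (0:ℝ), log t * exp (-t) = -eulerMascheroniConstant := by
  have hGamma : Complex.Gamma =ᶠ[𝓝 1] Complex.GammaIntegral := by
    filter_upwards [Complex.continuous_re.continuousAt.eventually
      (lt_mem_nhds (a := (0:ℝ)) (by simp))] with s hs using Complex.Gamma_eq_integral hs
  have h := ((Complex.hasDerivAt_GammaIntegral (by simp)).congr_of_eventuallyEq hGamma).unique
    Complex.hasDerivAt_Gamma_one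
  simp only [sub_self, Complex.cpow_zero, one_mul] at h
  simp_rw [← Complex.ofReal_mul, integral_complex_ofReal] at h
  exact_mod_cast h

/-- Dominates `|log t| * exp (-t)` by the Gamma integrands for `s = 1/2` and `s = 2`. -/
lemma abs_log_le_two_mul_rpow_neg_half_add_self {t : ℝ} (ht : 0 < t) :
    |log t| ≤ 2 * t ^ (-(1 / 2 : ℝ)) + t := by
  have hrpow : 0 < t ^ (-(1 / 2 : ℝ)) := rpow_pos_of_pos ht _
  rcases le_or_gt 1 t with h | h
  · rw [abs_of_nonneg (log_nonneg h)]
    linarith [log_le_self ht.le]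
  · rw [abs_of_nonpos (log_nonpos ht.le h.le)]
    have := log_le_sub_one_of_pos hrpow
    rw [log_rpow ht] at this
    linarith

lemma integrableOn_log_mul_exp_neg : IntegrableOn (fun t => log t * exp (-t)) (Ioi 0) := by
  have h₁ := GammaIntegral_convergent (by norm_num : (0:ℝ) < 1 / 2)
  have h₂ := GammaIntegral_convergent (by norm_num : (0:ℝ) < 2)
  refine ((h₁.const_mul 2).add h₂).mono'
    (by fun_prop : Measurable fun t : ℝ => log t * exp (-t)).aestronglyMeasurable ?_
  filter_upwards [ae_restrict_mem measurableSet_Ioi] with t (ht : 0 < t)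
  rw [norm_mul, norm_eq_abs, norm_of_nonneg (exp_pos _).le]
  norm_num
  linarith [mul_le_mul_of_nonneg_right (abs_log_le_two_mul_rpow_neg_half_add_self ht)
    (exp_pos (-t)).le]

lemma tendsto_log_mul_exp_neg_atTop : Tendsto (fun x => log x * exp (-x)) atTop (𝓝 0) := by
  refine squeeze_zero_norm' ?_ (by simpa using tendsto_pow_mul_exp_neg_atTop_nhds_zero 1)
  filter_upwards [eventually_ge_atTop 1] with x hx
  rw [norm_mul, norm_of_nonneg (log_nonneg hx), norm_of_nonneg (exp_pos _).le]
  gcongr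
  exact log_le_self (by linarith)

lemma expInt_eq_integral_log_mul_exp_neg_sub {s : ℝ} (hs : 0 < s) :
    expInt s = (∫ t in Ioi s, log t * exp (-t)) - exp (-s) * log s := by
  have hlogexp := integrableOn_log_mul_exp_neg.mono_set (Ioi_subset_Ioi hs.le)
  have hinv : IntegrableOn (fun t => t⁻¹ * exp (-t)) (Ioi s) := by
    simpa only [div_eq_inv_mul] using integrableOn_exp_neg_div_Ioi hs
  have hibp := integral_Ioi_deriv_mul_eq_sub (a := s) (u := log) (v := fun x => -exp (-x))
    (u' := fun x => x⁻¹) (v' := fun x => exp (-x)) (b' := 0)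
    (fun x hx => hasDerivAt_log (hs.trans hx).ne')
    (fun x _ => (hasDerivAt_neg x).exp.neg.congr_deriv (by ring))
    ((hinv.neg.add hlogexp).congr_fun
      (fun x _ => by simp only [Pi.add_apply, Pi.mul_apply, Pi.neg_apply]; ring) measurableSet_Ioi)
    (((continuousAt_log hs.ne').mul (by fun_prop)).tendsto.mono_left nhdsWithin_le_nhds)
    ((by simpa using tendsto_log_mul_exp_neg_atTop.neg :
      Tendsto (fun x => -(log x * exp (-x))) atTop (𝓝 0)).congr fun x => by simp)
  simp only [mul_neg, Pi.mul_apply] at hibp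
  rw [integral_add (f := fun x => -(x⁻¹ * exp (-x))) hinv.neg hlogexp, integral_neg] at hibp
  rw [expInt]
  simp_rw [div_eq_inv_mul]
  linarith

lemma tendsto_exp_neg_sub_one_div_nhdsNE_zero :
    Tendsto (fun s => (exp (-s) - 1) / s) (𝓝[≠] 0) (𝓝 (-1)) := by
  have h : HasDerivAt (fun s => exp (-s)) (-1) 0 := by simpa using (hasDerivAt_neg (0:ℝ)).exp
  refine h.tendsto_slope.congr fun s => ?_
  rw [slope_def_field]
  simp

lemma tendsto_expInt_add_log_nhdsGT_zero :
    Tendsto (fun s => expInt s + log s) (𝓝[>] 0) (𝓝 (-eulerMascheroniConstant)) := by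
  have htail : Tendsto (fun s => ∫ t in Ioi s, log t * exp (-t)) (𝓝[>] 0)
      (𝓝 (-eulerMascheroniConstant)) := by
    rw [← integral_log_mul_exp_neg]
    exact integrableOn_log_mul_exp_neg.continuousWithinAt_Ici_primitive_Ioi.mono Ioi_subset_Ici_self
  have hmul_log : Tendsto (fun s => s * log s) (𝓝[>] 0) (𝓝 0) := by
    simpa using continuous_mul_log.tendsto 0 |>.mono_left nhdsWithin_le_nhds
  have h := htail.sub ((tendsto_exp_neg_sub_one_div_nhdsNE_zero.mono_left
    (nhdsWithin_mono 0 fun x (hx : 0 < x) => hx.ne')).mul hmul_log)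
  rw [mul_zero, sub_zero] at h
  refine h.congr' ?_
  filter_upwards [self_mem_nhdsWithin] with s (hs : 0 < s)
  rw [expInt_eq_integral_log_mul_exp_neg_sub hs]
  field_simp
  ring

lemma hasDerivAt_radial_solution {r : ℝ} (hr : 0 < r) :
    HasDerivAt (fun x => (1 / 16) * ((exp (-x ^ 2) - 1) / x ^ 2 - expInt (x ^ 2) - 2 * log x))
      ((1 / 8) * (1 / r ^ 3 - exp (-r ^ 2) / r ^ 3 - 1 / r)) r := by
  have hsq : HasDerivAt (fun x => x ^ 2) (2 * r) r := by simpa using hasDerivAt_pow 2 r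
  have hexp : HasDerivAt (fun x => exp (-x ^ 2)) (exp (-r ^ 2) * -(2 * r)) r := hsq.neg.exp
  have hE : HasDerivAt (fun x => expInt (x ^ 2)) (-(exp (-r ^ 2) / r ^ 2) * (2 * r)) r :=
    (hasDerivAt_expInt (pow_pos hr 2)).comp (h := fun x => x ^ 2) r hsq
  refine (((((hexp.sub_const 1).div hsq (by positivity)).sub hE).sub
    ((hasDerivAt_log hr.ne').const_mul 2)).const_mul (1 / 16)).congr_deriv ?_
  field_simp
  ring

lemma hasDerivAt_radial_solution_deriv {r : ℝ} (hr : 0 < r) :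
    HasDerivAt (fun x => (1 / 8) * (1 / x ^ 3 - exp (-x ^ 2) / x ^ 3 - 1 / x))
      ((1 / 8) * (-3 / r ^ 4 + 2 * exp (-r ^ 2) / r ^ 2 + 3 * exp (-r ^ 2) / r ^ 4 + 1 / r ^ 2))
      r := by
  have hsq : HasDerivAt (fun x => x ^ 2) (2 * r) r := by simpa using hasDerivAt_pow 2 r
  have hcube : HasDerivAt (fun x => x ^ 3) (3 * r ^ 2) r := by simpa using hasDerivAt_pow 3 r
  have hexp : HasDerivAt (fun x => exp (-x ^ 2)) (exp (-r ^ 2) * -(2 * r)) r := hsq.neg.exp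
  have hinv : HasDerivAt (fun x => 1 / x) (-(1 / r ^ 2)) r := by simpa using hasDerivAt_inv hr.ne'
  refine (((((hasDerivAt_const r 1).div hcube (by positivity)).sub
    (hexp.div hcube (by positivity))).sub hinv).const_mul (1 / 8)).congr_deriv ?_
  field_simp
  ring

lemma tendsto_radial_solution_nhdsGT_zero :
    Tendsto (fun r => (1 / 16) * ((exp (-r ^ 2) - 1) / r ^ 2 - expInt (r ^ 2) - 2 * log r))
      (𝓝[>] 0) (𝓝 ((eulerMascheroniConstant - 1) / 16)) := by
  have hsq : Tendsto (fun r : ℝ => r ^ 2) (𝓝[>] 0) (𝓝[>] 0) := by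
    exact tendsto_nhdsWithin_iff.2 ⟨((continuous_pow 2).tendsto' 0 0 (by simp)).mono_left
      nhdsWithin_le_nhds, eventually_mem_nhdsWithin.mono fun r (hr : 0 < r) => pow_pos hr 2⟩
  have hquot := tendsto_exp_neg_sub_one_div_nhdsNE_zero.mono_left
    (nhdsWithin_mono 0 fun x (hx : 0 < x) => hx.ne')
  have h := ((hquot.sub tendsto_expInt_add_log_nhdsGT_zero).comp hsq).const_mul (1 / 16 : ℝ)
  convert h using 2 with r
  · simp only [Function.comp, log_pow]
    push_cast
    ring
  · ring

/-- The radial function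
`g(r) = (1/16)((e^{-r²}-1)/r² - E₁(r²) - 2 log r)` satisfies
`g'' + (3/r) g' = (e^{-r²}-1)/(4r²)` for `r > 0`, with
`g'(r) = (1/8)(1/r³ - e^{-r²}/r³ - 1/r)` and `g(r) → (γ-1)/16` as `r → 0⁺`. -/
theorem radial_ode_biharmonic4
    (g : ℝ → ℝ)
    (hg : ∀ r : ℝ, 0 < r → g r =
      (1 / 16) * ((Real.exp (-r ^ 2) - 1) / r ^ 2 - expInt (r ^ 2) - 2 * Real.log r)) :
    (∀ r : ℝ, 0 < r →
        deriv (deriv g) r + (3 / r) * deriv g r = (Real.exp (-r ^ 2) - 1) / (4 * r ^ 2)) ∧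
    (∀ r : ℝ, 0 < r →
        deriv g r = (1 / 8) * (1 / r ^ 3 - Real.exp (-r ^ 2) / r ^ 3 - 1 / r)) ∧
    Tendsto g (nhdsWithin 0 (Set.Ioi 0))
      (nhds ((Real.eulerMascheroniConstant - 1) / 16)) := by
  have hg' : ∀ r : ℝ, 0 < r →
      deriv g r = (1 / 8) * (1 / r ^ 3 - exp (-r ^ 2) / r ^ 3 - 1 / r) := fun r hr =>
    ((hasDerivAt_radial_solution hr).congr_of_eventuallyEq
      (eventually_nhds_iff.2 ⟨Ioi 0, hg, isOpen_Ioi, hr⟩)).deriv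
  refine ⟨fun r hr => ?_, hg', ?_⟩
  · rw [(eventuallyEq_of_mem (Ioi_mem_nhds hr) hg').deriv_eq,
      (hasDerivAt_radial_solution_deriv hr).deriv, hg' r hr]
    field_simp
    ring
  · exact tendsto_radial_solution_nhdsGT_zero.congr'
      (eventuallyEq_of_mem self_mem_nhdsWithin fun r hr => (hg r hr).symm)
end

section
/- For every k ∈ ℕ, the generalized Laguerre polynomial satisfies the identity L_{M-1}^{(n/2)}(|x|²) e^{-|x|²} = Σ_{j=0}^{M-1} ((-1)^j/(j! 4^j)) Δ^j e^{-|x|²} for all x ∈ ℝ^n, where Δ is the Laplacian on ℝ^n. -/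
/-!
With `r = ‖x‖²`, the Laplacian of a radial function `g(‖x‖²)` is `4 r g'' + 2 n g'`. Applied to
`g(r) = q(r) e^{-r}` with `q` a polynomial it gives `(L q)(r) e^{-r}` for an explicit second-order
operator `L` on polynomials, so `Δʲ e^{-‖x‖²} = (Lʲ 1)(‖x‖²) e^{-‖x‖²}`. Comparing coefficients, `L`
maps `L_j^{(n/2-1)}` to `-4 (j+1) L_{j+1}^{(n/2-1)}`, hence `Lʲ 1 = (-4)ʲ j! L_j^{(n/2-1)}` and the
`j`-th term of the sum is `L_j^{(n/2-1)}(‖x‖²) e^{-‖x‖²}`. Pascal's rule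
`L_j^{(α)} = L_{j-1}^{(α)} + L_j^{(α-1)}` makes the sum telescope to `L_{M-1}^{(n/2)}`.
-/

open Real

/-- The generalized Laguerre polynomial
`L_k^{(γ)}(y) = ∑_{i=0}^k (-1)^i Γ(k+γ+1)/(i! (k-i)! Γ(i+γ+1)) yⁱ`. -/
noncomputable def genLaguerre (k : ℕ) (γ : ℝ) (y : ℝ) : ℝ :=
  ∑ i ∈ Finset.range (k + 1),
    (-1) ^ i * Real.Gamma ((k : ℝ) + γ + 1) /
      ((Nat.factorial i) * (Nat.factorial (k - i)) * Real.Gamma ((i : ℝ) + γ + 1)) * y ^ i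

noncomputable def laplacian (n : ℕ) (f : EuclideanSpace ℝ (Fin n) → ℝ) :
    EuclideanSpace ℝ (Fin n) → ℝ :=
  fun x => ∑ i : Fin n,
    iteratedDeriv 2 (fun t : ℝ => f (x + t • EuclideanSpace.single i (1 : ℝ))) 0

open Polynomial
open scoped Nat

lemma Real.Gamma_add_nat {x : ℝ} (hx : 0 < x) (n : ℕ) :
    Gamma (x + n) = (ascPochhammer ℝ n).eval x * Gamma x := by
  induction n with
  | zero => simp
  | succ n ih =>
    rw [Nat.cast_succ, ← add_assoc, Gamma_add_one (by positivity), ih, ascPochhammer_succ_eval]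
    ring

lemma ascPochhammer_succ_eval_left {S : Type*} [CommSemiring S] (n : ℕ) (x : S) :
    (ascPochhammer S (n + 1)).eval x = x * (ascPochhammer S n).eval (x + 1) := by
  simp [ascPochhammer_succ_left]

/-- `L_k^{(α)}`, with `Γ(k+α+1)/Γ(i+α+1)` written as a rising factorial so that it makes sense
for every real `α`. -/
noncomputable def laguerre (α : ℝ) (k : ℕ) : ℝ[X] :=
  ∑ i ∈ Finset.range (k + 1),
    C ((-1) ^ i * (ascPochhammer ℝ (k - i)).eval (α + i + 1) / (i ! * (k - i)!)) * X ^ i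

lemma coeff_laguerre (α : ℝ) (k i : ℕ) :
    (laguerre α k).coeff i = if i ≤ k then
      (-1) ^ i * (ascPochhammer ℝ (k - i)).eval (α + i + 1) / (i ! * (k - i)!) else 0 := by
  simp [laguerre, finsetSum_coeff]

lemma coeff_laguerre_add (α : ℝ) (i d : ℕ) :
    (laguerre α (i + d)).coeff i =
      (-1) ^ i * (ascPochhammer ℝ d).eval (α + i + 1) / (i ! * d !) := by
  simp [coeff_laguerre]

lemma coeff_laguerre_of_lt (α : ℝ) {k i : ℕ} (h : k < i) : (laguerre α k).coeff i = 0 := by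
  simp [coeff_laguerre, h.not_ge]

lemma coeff_laguerre_self (α : ℝ) (k : ℕ) : (laguerre α k).coeff k = (-1) ^ k / k ! := by
  simp [coeff_laguerre]

lemma coeff_laguerre_succ_index (α : ℝ) (k i : ℕ) :
    ((i : ℝ) + 1) * (α + i + 1) * (laguerre α k).coeff (i + 1) =
      -((k : ℝ) - i) * (laguerre α k).coeff i := by
  obtain hik | rfl | hik := lt_trichotomy i k
  · obtain ⟨e, rfl⟩ : ∃ e, k = i + 1 + e := ⟨k - i - 1, by omega⟩
    rw [coeff_laguerre_add, show i + 1 + e = i + (e + 1) by omega, coeff_laguerre_add,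
      ascPochhammer_succ_eval_left, Nat.factorial_succ, Nat.factorial_succ]
    push_cast
    rw [show α + ((i : ℝ) + 1) + 1 = α + i + 1 + 1 by ring]
    field_simp
    ring
  · simp [coeff_laguerre_of_lt]
  · simp [coeff_laguerre_of_lt, hik, hik.trans (Nat.lt_succ_self i)]

lemma coeff_laguerre_succ_degree (α : ℝ) (k i : ℕ) :
    ((k : ℝ) + 1 - i) * (laguerre α (k + 1)).coeff i = (α + k + 1) * (laguerre α k).coeff i := by
  obtain hik | rfl | hik := lt_trichotomy i (k + 1)
  · obtain ⟨d, rfl⟩ := Nat.exists_eq_add_of_le (Nat.lt_succ_iff.mp hik)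
    rw [add_assoc, coeff_laguerre_add, coeff_laguerre_add, ascPochhammer_succ_eval,
      Nat.factorial_succ]
    push_cast
    field_simp
    ring
  · simp [coeff_laguerre_of_lt]
  · simp [coeff_laguerre_of_lt, hik, Nat.lt_of_succ_lt hik]

@[simp] lemma laguerre_zero (α : ℝ) : laguerre α 0 = 1 := by
  simp [laguerre]

lemma laguerre_succ (α : ℝ) (k : ℕ) :
    laguerre α (k + 1) = laguerre α k + laguerre (α - 1) (k + 1) := by
  ext i
  rw [coeff_add]
  obtain hik | rfl | hik := lt_trichotomy i (k + 1)
  · obtain ⟨d, rfl⟩ := Nat.exists_eq_add_of_le (Nat.lt_succ_iff.mp hik)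
    rw [add_assoc, coeff_laguerre_add, coeff_laguerre_add, coeff_laguerre_add,
      ascPochhammer_succ_eval, ascPochhammer_succ_eval_left, Nat.factorial_succ,
      show α - 1 + i + 1 + 1 = α + i + 1 by ring]
    push_cast
    field_simp
    ring
  · simp [coeff_laguerre_of_lt _ (Nat.lt_succ_self k), coeff_laguerre]
  · simp [coeff_laguerre_of_lt _ hik, coeff_laguerre_of_lt _ (Nat.lt_of_succ_lt hik)]

lemma sum_range_laguerre (α : ℝ) (k : ℕ) :
    ∑ j ∈ Finset.range (k + 1), laguerre (α - 1) j = laguerre α k := by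
  induction k with
  | zero => simp
  | succ k ih => rw [Finset.sum_range_succ, ih, laguerre_succ α k]

lemma genLaguerre_eq_eval_laguerre {α : ℝ} (hα : -1 < α) (k : ℕ) (y : ℝ) :
    genLaguerre k α y = (laguerre α k).eval y := by
  simp only [genLaguerre, laguerre, eval_finsetSum, eval_mul, eval_C, eval_pow, eval_X]
  refine Finset.sum_congr rfl fun i hi => ?_
  have hik : i ≤ k := Nat.lt_succ_iff.mp (Finset.mem_range.mp hi)
  have hpos : 0 < α + i + 1 := by linarith [(i.cast_nonneg : (0 : ℝ) ≤ i)]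
  have hGamma : Gamma (k + α + 1) =
      (ascPochhammer ℝ (k - i)).eval (α + i + 1) * Gamma (α + i + 1) := by
    rw [← Real.Gamma_add_nat hpos, Nat.cast_sub hik]
    ring_nf
  rw [hGamma, show (i : ℝ) + α + 1 = α + i + 1 by ring]
  field_simp [(Gamma_pos_of_pos hpos).ne']

lemma iteratedDeriv_two_comp_quadratic {g g' g'' : ℝ → ℝ}
    (hg : ∀ r, HasDerivAt g (g' r) r) (hg' : ∀ r, HasDerivAt g' (g'' r) r) (a b : ℝ) :
    iteratedDeriv 2 (fun t => g (a + b * t + t ^ 2)) 0 = g'' a * b ^ 2 + 2 * g' a := by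
  have hu (t : ℝ) : HasDerivAt (fun t => a + b * t + t ^ 2) (b + 2 * t) t :=
    (((hasDerivAt_id t).const_mul b).const_add a).add (hasDerivAt_pow 2 t) |>.congr_deriv
      (by simp)
  have hderiv : deriv (fun t => g (a + b * t + t ^ 2)) =
      fun t => g' (a + b * t + t ^ 2) * (b + 2 * t) :=
    funext fun t => ((hg _).comp t (hu t)).deriv
  have hsecond : HasDerivAt (fun t => g' (a + b * t + t ^ 2) * (b + 2 * t))
      (g'' (a + b * 0 + 0 ^ 2) * (b + 2 * 0) * (b + 2 * 0) + g' (a + b * 0 + 0 ^ 2) * 2) 0 :=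
    ((hg' _).comp 0 (hu 0)).mul (by simpa using ((hasDerivAt_id (0 : ℝ)).const_mul 2).const_add b)
  rw [iteratedDeriv_succ, iteratedDeriv_one, hderiv, hsecond.deriv]
  simp only [mul_zero, add_zero, zero_pow two_ne_zero]
  ring

lemma norm_add_smul_single_sq {n : ℕ} (x : EuclideanSpace ℝ (Fin n)) (i : Fin n) (t : ℝ) :
    ‖x + t • EuclideanSpace.single i (1 : ℝ)‖ ^ 2 = ‖x‖ ^ 2 + 2 * x i * t + t ^ 2 := by
  rw [norm_add_sq_real, real_inner_smul_right, EuclideanSpace.inner_single_right, norm_smul,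
    PiLp.norm_single]
  simp
  ring

lemma laplacian_comp_norm_sq {n : ℕ} {g g' g'' : ℝ → ℝ}
    (hg : ∀ r, HasDerivAt g (g' r) r) (hg' : ∀ r, HasDerivAt g' (g'' r) r)
    (x : EuclideanSpace ℝ (Fin n)) :
    laplacian n (fun y => g (‖y‖ ^ 2)) x =
      4 * ‖x‖ ^ 2 * g'' (‖x‖ ^ 2) + 2 * n * g' (‖x‖ ^ 2) := by
  have hsum : ∑ i, x i ^ 2 = ‖x‖ ^ 2 := by simp [EuclideanSpace.norm_sq_eq]
  simp only [laplacian, norm_add_smul_single_sq, iteratedDeriv_two_comp_quadratic hg hg']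
  simp [Finset.sum_add_distrib, ← Finset.mul_sum, mul_pow, hsum]
  ring

lemma hasDerivAt_eval_mul_exp_neg (q : ℝ[X]) (r : ℝ) :
    HasDerivAt (fun s => q.eval s * exp (-s)) ((derivative q - q).eval r * exp (-r)) r :=
  ((q.hasDerivAt r).mul (hasDerivAt_neg r).exp).congr_deriv (by simp; ring)

noncomputable def gaussianLaplacian (γ : ℝ) (q : ℝ[X]) : ℝ[X] :=
  4 * (X * (derivative (derivative q) - 2 * derivative q + q) + C γ * (derivative q - q))

lemma semiconj_gaussianLaplacian_laplacian (n : ℕ) :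
    Function.Semiconj
      (fun (q : ℝ[X]) (y : EuclideanSpace ℝ (Fin n)) => q.eval (‖y‖ ^ 2) * exp (-‖y‖ ^ 2))
      (gaussianLaplacian (n / 2)) (laplacian n) := by
  intro q
  funext x
  have h := laplacian_comp_norm_sq (hasDerivAt_eval_mul_exp_neg q)
    (hasDerivAt_eval_mul_exp_neg (derivative q - q)) x
  beta_reduce at h
  rw [h]
  simp only [gaussianLaplacian, eval_mul, eval_add, eval_sub, eval_X, eval_C, eval_ofNat,
    derivative_sub]
  ring

lemma coeff_gaussianLaplacian (γ : ℝ) (q : ℝ[X]) (m : ℕ) :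
    (gaussianLaplacian γ q).coeff m =
      4 * ((m + 1) * (m + γ) * q.coeff (m + 1) - (2 * m + γ) * q.coeff m + (X * q).coeff m) := by
  rcases m with _ | m
  · simp [gaussianLaplacian, coeff_derivative]
    ring
  · simp [gaussianLaplacian, coeff_derivative, coeff_X_mul]
    ring

lemma gaussianLaplacian_C_mul (γ c : ℝ) (q : ℝ[X]) :
    gaussianLaplacian γ (C c * q) = C c * gaussianLaplacian γ q := by
  simp only [gaussianLaplacian, derivative_C_mul]
  ring

lemma gaussianLaplacian_laguerre (α : ℝ) (j : ℕ) :
    gaussianLaplacian (α + 1) (laguerre α j) = C (-4 * ((j : ℝ) + 1)) * laguerre α (j + 1) := by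
  ext m
  rw [coeff_gaussianLaplacian, coeff_C_mul]
  have hindex := coeff_laguerre_succ_index α j m
  have hdegree := coeff_laguerre_succ_degree α j m
  rcases m with _ | i
  · rw [coeff_X_mul_zero]
    push_cast at hindex hdegree ⊢
    linear_combination 4 * hindex + 4 * hdegree
  · rw [coeff_X_mul]
    rcases eq_or_ne j i with rfl | hji
    · rw [coeff_laguerre_of_lt _ (Nat.lt_succ_self j), coeff_laguerre_of_lt _ (by omega),
        coeff_laguerre_self, coeff_laguerre_self, Nat.factorial_succ]
      push_cast
      field_simp
      ring
    · -- `hindex'` determines `(j - i) * coeff i` rather than `coeff i` itself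
      have hindex' := coeff_laguerre_succ_index α j i
      apply mul_left_cancel₀ (sub_ne_zero.mpr (by exact_mod_cast hji) : (j : ℝ) - i ≠ 0)
      push_cast at hindex hdegree ⊢
      linear_combination 4 * ((j : ℝ) - i) * hindex + 4 * hindex' + 4 * (j + 1) * hdegree

lemma iterate_gaussianLaplacian_one (α : ℝ) (j : ℕ) :
    (gaussianLaplacian (α + 1))^[j] 1 = C ((-4 : ℝ) ^ j * j !) * laguerre α j := by
  induction j with
  | zero => simp
  | succ j ih =>
    rw [Function.iterate_succ_apply', ih, gaussianLaplacian_C_mul, gaussianLaplacian_laguerre,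
      ← mul_assoc, ← C_mul, Nat.factorial_succ]
    push_cast
    congr 2
    ring

/-- For `M ≥ 1`,
`L_{M-1}^{(n/2)}(|x|²) e^{-|x|²} = ∑_{j=0}^{M-1} ((-1)^j/(j! 4^j)) Δ^j e^{-|x|²}`. -/
theorem laguerre_gaussian_laplacian_expansion (n M : ℕ) (hM : 1 ≤ M)
    (x : EuclideanSpace ℝ (Fin n)) :
    genLaguerre (M - 1) ((n : ℝ) / 2) (‖x‖ ^ 2) * Real.exp (-‖x‖ ^ 2) =
      ∑ j ∈ Finset.range M, ((-1 : ℝ) ^ j / (Nat.factorial j * 4 ^ j)) *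
        ((laplacian n)^[j] (fun y => Real.exp (-‖y‖ ^ 2)) x) := by
  have hterm (j : ℕ) :
      (-1 : ℝ) ^ j / (j ! * 4 ^ j) * (laplacian n)^[j] (fun y => exp (-‖y‖ ^ 2)) x =
        (laguerre (n / 2 - 1) j).eval (‖x‖ ^ 2) * exp (-‖x‖ ^ 2) := by
    have h := congrFun ((semiconj_gaussianLaplacian_laplacian n).iterate_right j 1) x
    simp only [eval_one, one_mul] at h
    have hL := iterate_gaussianLaplacian_one ((n : ℝ) / 2 - 1) j
    rw [sub_add_cancel] at hL
    have hcoeff : (-1 : ℝ) ^ j / (j ! * 4 ^ j) * ((-4) ^ j * j !) = 1 := by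
      rw [neg_pow (4 : ℝ)]
      field_simp
      rw [← pow_mul, mul_comm, pow_mul]
      norm_num
    rw [← h, hL, eval_mul, eval_C, ← mul_assoc, ← mul_assoc, hcoeff, one_mul]
  obtain ⟨k, rfl⟩ : ∃ k, M = k + 1 := ⟨M - 1, by omega⟩
  have hα : -1 < (n : ℝ) / 2 := by linarith [(by positivity : (0 : ℝ) ≤ n / 2)]
  rw [Finset.sum_congr rfl fun j _ => hterm j, ← Finset.sum_mul, ← eval_finsetSum,
    sum_range_laguerre, Nat.add_sub_cancel, genLaguerre_eq_eval_laguerre hα]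
end
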